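/- arXiv:math/0106085 — 9 statements merged into one kernel-verified Lean document; each statement's English description precedes it below -/
import Mathlib

section
/- Let X be a zero-dimensional set of reals. Then X satisfies the Menger property Ufin(O,O) if, and only if, for every continuous function Ψ : X → ℕ^ℕ the image Ψ[X] is not a dominating subset of ℕ^ℕ. -/
/-!
If `X` is Menger and `Ψ` continuous, the covers `{x | Ψ x n ≤ m}` (for `n` beyond any `k`)
give bounds `μ_k` such that every `Ψ x` drops below `μ_k` somewhere beyond `k`; a diagonal of
the `μ_k` is then dominated by no `Ψ x`. Conversely, in a second-countable space with a clopen
basis each open cover is refined by a countable clopen cover, and the least index of a member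
containing `x` depends continuously on `x`. Doing this for a sequence of covers with no finite
selections covering gives `Ψ`; a point missed by the selections of the first `g n + 1` members
has `Ψ x > g` everywhere, so the range of `Ψ` is dominating.
-/

open Filter

/-- `f ≤* g`: `f n ≤ g n` for all but finitely many `n`. -/
def EvLE (f g : ℕ → ℕ) : Prop := ∀ᶠ n in atTop, f n ≤ g n

/-- A subset of the Baire space is dominating if every function is
eventually dominated by a member of it. -/
def Dominating (Y : Set (ℕ → ℕ)) : Prop := ∀ g : ℕ → ℕ, ∃ f ∈ Y, EvLE g f

/-- A subset of the Baire space is bounded (w.r.t. `≤*`) if some single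
function eventually dominates all its members. -/
def BoundedStar (Y : Set (ℕ → ℕ)) : Prop := ∃ g : ℕ → ℕ, ∀ f ∈ Y, EvLE f g

/-- `maxfin Y`: pointwise maxima of nonempty finite subsets of `Y`. -/
def maxfin (Y : Set (ℕ → ℕ)) : Set (ℕ → ℕ) :=
  {g | ∃ F : Finset (ℕ → ℕ), F.Nonempty ∧ ↑F ⊆ Y ∧ g = fun n => F.sup (fun f => f n)}

/-- `Y` is `k`-dominating: for each `f` there are `g_1, …, g_k ∈ Y` whose
pointwise maximum eventually dominates `f`. -/
def KDominating (Y : Set (ℕ → ℕ)) (k : ℕ) : Prop :=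
  ∀ f : ℕ → ℕ, ∃ g : Fin k → (ℕ → ℕ), (∀ i, g i ∈ Y) ∧
    ∀ᶠ n in atTop, f n ≤ Finset.univ.sup (fun i => g i n)

/-- An open cover of a topological space. -/
def IsOpenCover {α : Type*} [TopologicalSpace α] (𝒰 : Set (Set α)) : Prop :=
  (∀ u ∈ 𝒰, IsOpen u) ∧ ⋃₀ 𝒰 = Set.univ

/-- An ω-cover: a cover such that every finite subset of the space is
contained in some member. -/
def IsOmegaCover {α : Type*} (𝒱 : Set (Set α)) : Prop :=
  ⋃₀ 𝒱 = Set.univ ∧ ∀ F : Set α, F.Finite → ∃ V ∈ 𝒱, F ⊆ V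

/-- A γ-cover: an infinite cover such that every point belongs to all but
finitely many members. -/
def IsGammaCover {α : Type*} (𝒱 : Set (Set α)) : Prop :=
  ⋃₀ 𝒱 = Set.univ ∧ 𝒱.Infinite ∧ ∀ x : α, {V ∈ 𝒱 | x ∉ V}.Finite

/-- A set of reals is zero-dimensional: its subspace topology has a base of
clopen sets. -/
def ZeroDimensionalSet (X : Set ℝ) : Prop :=
  ∃ B : Set (Set ↥X), TopologicalSpace.IsTopologicalBasis B ∧ ∀ b ∈ B, IsClopen b

/-- The Menger property `Ufin(O,O)`. -/
def MengerProp (α : Type*) [TopologicalSpace α] : Prop :=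
  ∀ 𝒰 : ℕ → Set (Set α), (∀ n, (𝒰 n).Countable ∧ IsOpenCover (𝒰 n)) →
    ∃ ℱ : ℕ → Set (Set α), (∀ n, (ℱ n).Finite ∧ ℱ n ⊆ 𝒰 n) ∧
      (⋃ n, ⋃₀ ℱ n) = Set.univ

/-- The Hurewicz property `Ufin(O,Γ)`. -/
def HurewiczProp (α : Type*) [TopologicalSpace α] : Prop :=
  ∀ 𝒰 : ℕ → Set (Set α), (∀ n, (𝒰 n).Countable ∧ IsOpenCover (𝒰 n)) →
    ∃ ℱ : ℕ → Set (Set α), (∀ n, (ℱ n).Finite ∧ ℱ n ⊆ 𝒰 n) ∧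
      ((∃ n, ⋃₀ ℱ n = Set.univ) ∨ IsGammaCover {s | ∃ n, s = ⋃₀ ℱ n})

/-- The property `Ufin(O,Ω)`. -/
def UfinOOmega (α : Type*) [TopologicalSpace α] : Prop :=
  ∀ 𝒰 : ℕ → Set (Set α), (∀ n, (𝒰 n).Countable ∧ IsOpenCover (𝒰 n)) →
    ∃ ℱ : ℕ → Set (Set α), (∀ n, (ℱ n).Finite ∧ ℱ n ⊆ 𝒰 n) ∧
      ((∃ n, ⋃₀ ℱ n = Set.univ) ∨ IsOmegaCover {s | ∃ n, s = ⋃₀ ℱ n})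

open Set TopologicalSpace

section Menger

variable {α : Type*} [TopologicalSpace α]

theorem MengerProp.exists_forall_exists_apply_le (hM : MengerProp α) {Ψ : α → ℕ → ℕ}
    (hΨ : Continuous Ψ) : ∃ μ : ℕ → ℕ, ∀ x, ∃ n, Ψ x n ≤ μ n := by
  set V : ℕ → ℕ → Set α := fun n m => {x | Ψ x n ≤ m}
  have hV_open (n m : ℕ) : IsOpen (V n m) :=
    (isOpen_discrete {k | k ≤ m}).preimage ((continuous_apply n).comp hΨ)
  have hV_cover (n : ℕ) : IsOpenCover (range (V n)) :=
    ⟨forall_mem_range.2 (hV_open n), eq_univ_of_forall fun x => ⟨_, ⟨Ψ x n, rfl⟩, le_refl (Ψ x n)⟩⟩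
  obtain ⟨ℱ, hℱ, hcover⟩ := hM (fun n => range (V n)) fun n => ⟨countable_range _, hV_cover n⟩
  have hbound (n : ℕ) : ∃ μ, ⋃₀ ℱ n ⊆ V n μ := by
    obtain ⟨t, -, ht, htℱ⟩ := (hℱ n).1.exists_subset_finite_image_eq (image_univ ▸ (hℱ n).2)
    obtain ⟨μ, hμ⟩ := ht.bddAbove
    refine ⟨μ, htℱ ▸ sUnion_subset ?_⟩
    rintro _ ⟨m, hm, rfl⟩ x (hx : Ψ x n ≤ m)
    exact hx.trans (hμ hm)
  choose μ hμ using hbound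
  refine ⟨μ, fun x => ?_⟩
  obtain ⟨n, hn⟩ := mem_iUnion.1 (hcover ▸ mem_univ x)
  exact ⟨n, hμ n hn⟩

/-- The diagonal `g n = 1 + max_{k ≤ n} μ k (n - k)` escapes every `f ∈ Y` beyond each `k`. -/
theorem not_dominating_of_forall_exists_shift_le {Y : Set (ℕ → ℕ)}
    (h : ∀ k, ∃ μ : ℕ → ℕ, ∀ f ∈ Y, ∃ j, f (k + j) ≤ μ j) : ¬ Dominating Y := by
  choose μ hμ using h
  intro hY
  obtain ⟨f, hf, hgf⟩ := hY fun n => (Finset.range (n + 1)).sup (fun k => μ k (n - k)) + 1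
  obtain ⟨k, hk⟩ := eventually_atTop.1 hgf
  obtain ⟨j, hj⟩ := hμ k f hf
  have hμ_le : μ k j ≤ (Finset.range (k + j + 1)).sup (fun i => μ i (k + j - i)) := by
    simpa using Finset.le_sup (f := fun i => μ i (k + j - i))
      (Finset.mem_range.2 (Nat.lt_succ_of_le (Nat.le_add_right k j)))
  have hgf_kj := hk (k + j) (Nat.le_add_right k j)
  simp only at hgf_kj
  omega

theorem MengerProp.not_dominating_range (hM : MengerProp α) {Ψ : α → ℕ → ℕ}
    (hΨ : Continuous Ψ) : ¬ Dominating (range Ψ) :=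
  not_dominating_of_forall_exists_shift_le fun k =>
    have hΨk : Continuous fun x j => Ψ x (k + j) := by fun_prop
    let ⟨μ, hμ⟩ := hM.exists_forall_exists_apply_le hΨk
    ⟨μ, forall_mem_range.2 hμ⟩

theorem exists_continuous_mem_of_isClopen {c : ℕ → Set α} (hc : ∀ k, IsClopen (c k))
    (hcover : ⋃ k, c k = univ) : ∃ φ : α → ℕ, Continuous φ ∧ ∀ x, x ∈ c (φ x) := by
  classical
  have hex (x : α) : ∃ k, x ∈ c k := mem_iUnion.1 (hcover ▸ mem_univ x)
  refine ⟨fun x => Nat.find (hex x), continuous_discrete_rng.2 fun m => ?_,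
    fun x => Nat.find_spec (hex x)⟩
  have hfiber : (fun x => Nat.find (hex x)) ⁻¹' {m} = c m ∩ ⋂ i ∈ Iio m, (c i)ᶜ := by
    ext x
    simp [Nat.find_eq_iff]
  rw [hfiber]
  exact (hc m).isOpen.inter <| (finite_Iio m).isOpen_biInter fun i _ => (hc i).isClosed.isOpen_compl

theorem IsOpenCover.exists_continuous_nat_mem [SecondCountableTopology α] [Nonempty α]
    {B : Set (Set α)} (hB : IsTopologicalBasis B) (hBc : ∀ b ∈ B, IsClopen b)
    {𝒰 : Set (Set α)} (h𝒰 : IsOpenCover 𝒰) :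
    ∃ (U : ℕ → Set α) (φ : α → ℕ), (∀ k, U k ∈ 𝒰) ∧ Continuous φ ∧ ∀ x, x ∈ U (φ x) := by
  set S := {b ∈ B | ∃ U ∈ 𝒰, b ⊆ U}
  have hS_cover : ⋃₀ S = univ := by
    refine eq_univ_of_forall fun x => ?_
    obtain ⟨U, hU, hxU⟩ := mem_sUnion.1 (h𝒰.2 ▸ mem_univ x)
    obtain ⟨b, hb, hxb, hbU⟩ := hB.exists_subset_of_mem_open hxU (h𝒰.1 U hU)
    exact ⟨b, ⟨hb, U, hU, hbU⟩, hxb⟩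
  obtain ⟨T, hT, hTS, hT_cover⟩ :=
    isOpen_sUnion_countable S fun b hb => (hBc b hb.1).isOpen
  rw [hS_cover] at hT_cover
  obtain ⟨c, rfl⟩ := hT.exists_eq_range (.of_sUnion_eq_univ hT_cover)
  obtain ⟨φ, hφ, hφc⟩ := exists_continuous_mem_of_isClopen (fun k => hBc _ (hTS ⟨k, rfl⟩).1)
    (sUnion_range c ▸ hT_cover)
  choose U hU hcU using fun k => (hTS ⟨k, rfl⟩).2
  exact ⟨U, φ, hU, hφ, fun x => hcU _ (hφc x)⟩

theorem exists_continuous_dominating_range_of_not_mengerProp [SecondCountableTopology α]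
    {B : Set (Set α)} (hB : IsTopologicalBasis B) (hBc : ∀ b ∈ B, IsClopen b)
    (hM : ¬ MengerProp α) : ∃ Ψ : α → ℕ → ℕ, Continuous Ψ ∧ Dominating (range Ψ) := by
  simp only [MengerProp, not_forall, not_exists, not_and] at hM
  obtain ⟨𝒰, h𝒰, hfail⟩ := hM
  obtain ⟨x₀, -⟩ := (ne_univ_iff_exists_notMem _).1 <|
    hfail (fun _ => ∅) fun _ => ⟨finite_empty, empty_subset _⟩
  have : Nonempty α := ⟨x₀⟩
  choose U φ hU hφ hφU using fun n => (h𝒰 n).2.exists_continuous_nat_mem hB hBc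
  refine ⟨fun x n => φ n x, continuous_pi hφ, fun g => ?_⟩
  obtain ⟨x, hx⟩ := (ne_univ_iff_exists_notMem _).1 <|
    hfail (fun n => U n '' Iic (g n)) fun n =>
      ⟨(finite_Iic _).image _, image_subset_iff.2 fun k _ => hU n k⟩
  refine ⟨_, mem_range_self x, Eventually.of_forall fun n => le_of_not_gt fun hlt => hx ?_⟩
  exact mem_iUnion.2 ⟨n, U n (φ n x), mem_image_of_mem _ hlt.le, hφU n x⟩

theorem mengerProp_iff_forall_continuous_not_dominating [SecondCountableTopology α]
    {B : Set (Set α)} (hB : IsTopologicalBasis B) (hBc : ∀ b ∈ B, IsClopen b) :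
    MengerProp α ↔ ∀ Ψ : α → ℕ → ℕ, Continuous Ψ → ¬ Dominating (range Ψ) :=
  ⟨fun hM _ hΨ => hM.not_dominating_range hΨ, fun h => by_contra fun hM =>
    let ⟨Ψ, hΨ, hD⟩ := exists_continuous_dominating_range_of_not_mengerProp hB hBc hM
    h Ψ hΨ hD⟩

end Menger

/-- Hurewicz's characterization of the Menger property: a zero-dimensional
set of reals satisfies `Ufin(O,O)` iff no continuous image of it in the
Baire space is dominating. -/
theorem menger_iff_no_dominating_continuous_image (X : Set ℝ)
    (hX : ZeroDimensionalSet X) :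
    MengerProp ↥X ↔
      ∀ Ψ : ↥X → (ℕ → ℕ), Continuous Ψ → ¬ Dominating (Set.range Ψ) :=
  let ⟨_, hB, hBc⟩ := hX
  mengerProp_iff_forall_continuous_not_dominating hB hBc
end

section
/- Let X be a zero-dimensional set of reals. Then X satisfies the Hurewicz property Ufin(O,Γ) if, and only if, for every continuous function Ψ : X → ℕ^ℕ the image Ψ[X] is bounded with respect to ≤*. -/
open Filter

open Filter

private lemma nat_unbounded {W : Set ℕ} (h : W.Infinite) (a : ℕ) : ∃ b ∈ W, a ≤ b := by
  obtain ⟨b, hb, hab⟩ := h.exists_gt a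
  exact ⟨b, hb, hab.le⟩

/-- From an infinite range of a set-valued sequence, extract indices `N k ≥ k`
with pairwise distinct values. -/
private lemma exists_inj_ge {α : Type*} (S : ℕ → Set α)
    (hV : {s | ∃ n, s = S n}.Infinite) :
    ∃ N : ℕ → ℕ, (∀ k, k ≤ N k) ∧ Function.Injective (fun k => S (N k)) := by
  classical
  set W : Set ℕ := {n | ∀ j < n, S j ≠ S n} with hWdef
  have hW : W.Infinite := by
    intro hfin
    apply hV
    have hsub : {s | ∃ n, s = S n} ⊆ S '' W := by
      rintro s ⟨n, rfl⟩
      have hex : ∃ m, S m = S n := ⟨n, rfl⟩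
      refine ⟨Nat.find hex, ?_, Nat.find_spec hex⟩
      intro j hj hc
      exact Nat.find_min hex hj (hc.trans (Nat.find_spec hex))
    exact (hfin.image S).subset hsub
  have hgt : ∀ a : ℕ, ∃ b ∈ W, a < b := fun a => hW.exists_gt a
  let N : ℕ → ℕ := fun k => Nat.rec (hgt 0).choose (fun _ ih => (hgt ih).choose) k
  have hN0 : N 0 ∈ W := (hgt 0).choose_spec.1
  have hNs : ∀ k, N (k + 1) ∈ W ∧ N k < N (k + 1) := by
    intro k
    exact ⟨(hgt (N k)).choose_spec.1, (hgt (N k)).choose_spec.2⟩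
  have hmem : ∀ k, N k ∈ W := by
    intro k; cases k with
    | zero => exact hN0
    | succ k => exact (hNs k).1
  have hmono : StrictMono N := strictMono_nat_of_lt_succ fun k => (hNs k).2
  refine ⟨N, fun k => hmono.le_apply, ?_⟩
  have key : ∀ j k, j < k → S (N j) ≠ S (N k) := by
    intro j k hjk
    exact hmem k (N j) (hmono hjk)
  intro a b hab
  by_contra hne
  rcases lt_trichotomy a b with h | h | h
  · exact key a b h hab
  · exact hne h
  · exact key b a h hab.symm

/-- A finite subset of the range of a monotone sequence of sets has union
contained in a single member. -/
private lemma exists_sup_bound {α : Type*} {f : ℕ → Set α} (hmono : Monotone f)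
    {F : Set (Set α)} (hF : F.Finite) (hsub : F ⊆ Set.range f) :
    ∃ m, ⋃₀ F ⊆ f m := by
  classical
  let φ : Set α → ℕ := fun s => if h : ∃ m, s = f m then h.choose else 0
  have hφ : ∀ s ∈ F, s = f (φ s) := by
    intro s hs
    obtain ⟨m, hm⟩ := hsub hs
    have h : ∃ m, s = f m := ⟨m, hm.symm⟩
    simp only [φ, dif_pos h]
    exact h.choose_spec
  refine ⟨hF.toFinset.sup φ, ?_⟩
  intro x hx
  obtain ⟨s, hsF, hxs⟩ := hx
  have : s ⊆ f (hF.toFinset.sup φ) := by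
    rw [hφ s hsF]
    exact hmono (Finset.le_sup (hF.mem_toFinset.mpr hsF))
  exact this hxs
private lemma hurewicz_forward {α : Type*} [TopologicalSpace α] [Nonempty α]
    (h : HurewiczProp α) (Ψ : α → ℕ → ℕ) (hΨ : Continuous Ψ) :
    BoundedStar (Set.range Ψ) := by
  classical
  set V : ℕ → ℕ → Set α := fun s m => {x | ∀ k ≤ s, Ψ x k ≤ m} with hVdef
  have hVopen : ∀ s m, IsOpen (V s m) := by
    intro s m
    have : V s m = ⋂ k ∈ Finset.range (s + 1), {x | Ψ x k ≤ m} := by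
      ext x
      simp [hVdef, Nat.lt_succ_iff]
    rw [this]
    refine isOpen_biInter_finset fun k _ => ?_
    have hc : Continuous fun x => Ψ x k := (continuous_apply k).comp hΨ
    have : {x : α | Ψ x k ≤ m} = (fun x => Ψ x k) ⁻¹' (Set.Iic m) := rfl
    rw [this]
    exact (isOpen_discrete _).preimage hc
  have hVmono : ∀ s, Monotone (V s) := by
    intro s m₁ m₂ hm x hx k hk
    exact (hx k hk).trans hm
  have hVanti : ∀ m s₁ s₂, s₁ ≤ s₂ → V s₂ m ⊆ V s₁ m := by
    intro m s₁ s₂ hs x hx k hk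
    exact hx k (hk.trans hs)
  have hVcov : ∀ s, (⋃ m, V s m) = Set.univ := by
    intro s
    refine Set.eq_univ_of_forall fun x => ?_
    refine Set.mem_iUnion.mpr ⟨(Finset.range (s + 1)).sup (Ψ x), fun k hk => ?_⟩
    exact Finset.le_sup (Finset.mem_range.mpr (Nat.lt_succ_of_le hk))
  by_cases hA : ∀ n, ∃ m, V n m = Set.univ
  · choose m hm using hA
    refine ⟨m, ?_⟩
    rintro f ⟨x, rfl⟩
    refine Filter.Eventually.of_forall fun n => ?_
    have hx : x ∈ V n (m n) := (hm n).symm ▸ Set.mem_univ x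
    exact hx n le_rfl
  · push_neg at hA
    obtain ⟨t, ht⟩ := hA
    have hcovs : ∀ n, (Set.range (fun m => V (t + n) m)).Countable ∧
        IsOpenCover (Set.range (fun m => V (t + n) m)) := by
      intro n
      refine ⟨Set.countable_range _, fun u hu => ?_, ?_⟩
      · obtain ⟨m, rfl⟩ := hu
        exact hVopen _ _
      · rw [Set.sUnion_range]
        exact hVcov _
    obtain ⟨ℱ, hℱ, hdisj⟩ := h (fun n => Set.range (fun m => V (t + n) m)) hcovs
    have hbound : ∀ n, ∃ m, ⋃₀ ℱ n ⊆ V (t + n) m := by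
      intro n
      exact exists_sup_bound (hVmono _) (hℱ n).1 (hℱ n).2
    choose m hm using hbound
    rcases hdisj with ⟨N, hN⟩ | hγ
    · exfalso
      apply ht (m N)
      refine Set.eq_univ_of_forall fun x => ?_
      have hx : x ∈ V (t + N) (m N) := hm N (hN ▸ Set.mem_univ x)
      exact hVanti _ _ _ (Nat.le_add_right t N) hx
    · obtain ⟨-, hinf, hfin⟩ := hγ
      obtain ⟨N, hNge, hNinj⟩ := exists_inj_ge (fun n => ⋃₀ ℱ n) hinf
      refine ⟨fun k => m (N k), ?_⟩
      rintro f ⟨x, rfl⟩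
      have hK : {k | x ∉ ⋃₀ ℱ (N k)}.Finite := by
        have hsub : {k | x ∉ ⋃₀ ℱ (N k)} ⊆
            (fun k => ⋃₀ ℱ (N k)) ⁻¹' {s | (∃ n, s = ⋃₀ ℱ n) ∧ x ∉ s} := by
          intro k hk
          exact ⟨⟨N k, rfl⟩, hk⟩
        refine Set.Finite.subset (Set.Finite.preimage (hNinj.injOn) ?_) hsub
        exact (hfin x)
      obtain ⟨b, hb⟩ := hK.bddAbove
      refine eventually_atTop.mpr ⟨b + 1, fun k hk => ?_⟩
      have hxk : x ∈ ⋃₀ ℱ (N k) := by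
        by_contra hc
        exact absurd (hb hc) (by omega)
      have : x ∈ V (t + N k) (m (N k)) := hm (N k) hxk
      exact this k ((hNge k).trans (Nat.le_add_left _ _))
private lemma hurewicz_backward (X : Set ℝ) [Nonempty ↥X]
    (hX : ZeroDimensionalSet X)
    (hb : ∀ Ψ : ↥X → (ℕ → ℕ), Continuous Ψ → BoundedStar (Set.range Ψ)) :
    HurewiczProp ↥X := by
  classical
  obtain ⟨B, hBbasis, hBclopen⟩ := hX
  intro 𝒰 h𝒰
  by_cases hfs : ∃ n, ∃ F : Set (Set ↥X), F.Finite ∧ F ⊆ 𝒰 n ∧ ⋃₀ F = Set.univ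
  · obtain ⟨n₀, F, hFfin, hFsub, hFcov⟩ := hfs
    refine ⟨fun k => if k = n₀ then F else ∅, fun k => ?_, Or.inl ⟨n₀, by simp [hFcov]⟩⟩
    by_cases hk : k = n₀ <;> simp [hk, hFfin, hFsub]
  · push_neg at hfs
    -- refine each cover to a countable clopen cover
    have hall : ∀ n, ∃ E : ℕ → Set ↥X, (∀ j, IsClopen (E j)) ∧
        (∀ j, ∃ U ∈ 𝒰 n, E j ⊆ U) ∧ (⋃ j, E j) = Set.univ := by
      intro n
      obtain ⟨hopen, hcov⟩ := (h𝒰 n).2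
      set ι := {b : Set ↥X // b ∈ B ∧ ∃ U ∈ 𝒰 n, b ⊆ U} with hιdef
      have hsopen : ∀ i : ι, IsOpen (i.1 : Set ↥X) := fun i => (hBclopen _ i.2.1).isOpen
      obtain ⟨T, hTc, hTeq⟩ := TopologicalSpace.isOpen_iUnion_countable
        (fun i : ι => (i.1 : Set ↥X)) hsopen
      have huniv : ⋃ i : ι, (i.1 : Set ↥X) = Set.univ := by
        refine Set.eq_univ_of_forall fun x => ?_
        have hx : x ∈ ⋃₀ 𝒰 n := hcov ▸ Set.mem_univ x
        obtain ⟨U, hU, hxU⟩ := hx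
        obtain ⟨v, hv, hxv, hvU⟩ := hBbasis.exists_subset_of_mem_open hxU (hopen U hU)
        exact Set.mem_iUnion.mpr ⟨⟨v, hv, U, hU, hvU⟩, hxv⟩
      have hTuniv : ⋃ i ∈ T, (i.1 : Set ↥X) = Set.univ := by rw [hTeq, huniv]
      have hTne : T.Nonempty := by
        by_contra hT
        rw [Set.not_nonempty_iff_eq_empty] at hT
        have : (Set.univ : Set ↥X) = ∅ := by
          rw [← hTuniv, hT]; simp
        exact Set.univ_nonempty.ne_empty this
      obtain ⟨e, he⟩ := hTc.exists_eq_range hTne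
      refine ⟨fun j => ((e j).1 : Set ↥X), fun j => hBclopen _ (e j).2.1,
        fun j => (e j).2.2, ?_⟩
      rw [← hTuniv, he, Set.biUnion_range]
    choose E hEclopen hEref hEcov using hall
    choose U hUmem hEU using hEref
    have hex : ∀ (x : ↥X) (n : ℕ), ∃ j, x ∈ E n j := by
      intro x n
      have := hEcov n
      exact Set.mem_iUnion.mp (this ▸ Set.mem_univ x)
    set Ψ : ↥X → ℕ → ℕ := fun x n => Nat.find (hex x n) with hΨdef
    have hmem : ∀ x n, x ∈ E n (Ψ x n) := fun x n => Nat.find_spec (hex x n)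
    have hΨcont : Continuous Ψ := by
      refine continuous_pi fun n => continuous_discrete_rng.mpr fun j => ?_
      have hfib : (fun x => Ψ x n) ⁻¹' {j} =
          E n j \ ⋃ i ∈ Finset.range j, E n i := by
        ext x
        simp only [Set.mem_preimage, Set.mem_singleton_iff, hΨdef,
          Nat.find_eq_iff, Set.mem_diff, Set.mem_iUnion, Finset.mem_range,
          not_exists]
      rw [hfib]
      refine (hEclopen n j).isOpen.sdiff ?_
      exact Set.Finite.isClosed_biUnion (Finset.range j).finite_toSet
        (fun i _ => (hEclopen n i).isClosed)
    obtain ⟨g, hg⟩ := hb Ψ hΨcont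
    have hg' : ∀ x : ↥X, ∀ᶠ n in atTop, Ψ x n ≤ g n := fun x => hg _ ⟨x, rfl⟩
    set ℱ : ℕ → Set (Set ↥X) := fun n => U n '' Set.Iic (g n) with hℱdef
    have hℱfin : ∀ n, (ℱ n).Finite := fun n => (Set.finite_Iic _).image _
    have hℱsub : ∀ n, ℱ n ⊆ 𝒰 n := by
      rintro n _ ⟨j, _, rfl⟩
      exact hUmem n j
    have hA : ∀ x : ↥X, ∃ N, ∀ n ≥ N, x ∈ ⋃₀ ℱ n := by
      intro x
      obtain ⟨N, hN⟩ := eventually_atTop.mp (hg' x)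
      refine ⟨N, fun n hn => ?_⟩
      exact ⟨U n (Ψ x n), ⟨Ψ x n, hN n hn, rfl⟩, hEU n (Ψ x n) (hmem x n)⟩
    have hne : ∀ n, ⋃₀ ℱ n ≠ Set.univ := fun n => hfs n (ℱ n) (hℱfin n) (hℱsub n)
    refine ⟨ℱ, fun n => ⟨hℱfin n, hℱsub n⟩, Or.inr ⟨?_, ?_, ?_⟩⟩
    · refine Set.eq_univ_of_forall fun x => ?_
      obtain ⟨N, hN⟩ := hA x
      exact ⟨⋃₀ ℱ N, ⟨N, rfl⟩, hN N le_rfl⟩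
    · intro hfin
      have hpig : ∃ s ∈ {s | ∃ n, s = ⋃₀ ℱ n}, {n | ⋃₀ ℱ n = s}.Infinite := by
        by_contra hcon
        push_neg at hcon
        have hcover : (Set.univ : Set ℕ) ⊆
            ⋃ s ∈ {s | ∃ n, s = ⋃₀ ℱ n}, {n | ⋃₀ ℱ n = s} := by
          intro n _
          exact Set.mem_biUnion ⟨n, rfl⟩ rfl
        exact Set.infinite_univ ((hfin.biUnion hcon).subset hcover)
      obtain ⟨s, ⟨n₁, rfl⟩, hsinf⟩ := hpig
      apply hne n₁
      refine Set.eq_univ_of_forall fun x => ?_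
      obtain ⟨N, hN⟩ := hA x
      obtain ⟨n, hn, hnN⟩ := nat_unbounded hsinf N
      exact hn ▸ hN n hnN
    · intro x
      obtain ⟨N, hN⟩ := hA x
      have hsub : {V ∈ {s | ∃ n, s = ⋃₀ ℱ n} | x ∉ V} ⊆
          (fun n => ⋃₀ ℱ n) '' Set.Iio N := by
        rintro V ⟨⟨n, rfl⟩, hxV⟩
        refine ⟨n, ?_, rfl⟩
        by_contra hc
        exact hxV (hN n (le_of_not_gt hc))
      exact ((Set.finite_Iio N).image _).subset hsub
/-- Hurewicz's characterization of the Hurewicz property: a zero-dimensional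
set of reals satisfies `Ufin(O,Γ)` iff every continuous image of it in the
Baire space is bounded w.r.t. `≤*`. -/
theorem hurewicz_iff_bounded_continuous_image (X : Set ℝ)
    (hX : ZeroDimensionalSet X) :
    HurewiczProp ↥X ↔
      ∀ Ψ : ↥X → (ℕ → ℕ), Continuous Ψ → BoundedStar (Set.range Ψ) := by
  rcases isEmpty_or_nonempty ↥X with hE | hNE
  · constructor
    · intro _ Ψ _
      refine ⟨fun _ => 0, ?_⟩
      rintro f ⟨x, rfl⟩
      exact (hE.false x).elim
    · intro _ 𝒰 _
      refine ⟨fun _ => ∅, fun n => ⟨Set.finite_empty, Set.empty_subset _⟩, Or.inl ⟨0, ?_⟩⟩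
      simp [Set.univ_eq_empty_iff.mpr hE]
  · exact ⟨fun h Ψ hΨ => hurewicz_forward h Ψ hΨ,
      fun hb => hurewicz_backward X hX hb⟩
end

section
/- Let X be a zero-dimensional set of reals. Then X satisfies Ufin(O,Ω) if, and only if, for every continuous function Ψ : X → ℕ^ℕ the set maxfin(Ψ[X]) is not a dominating subset of ℕ^ℕ. -/
open Filter

/-!
Each coordinate `k` of a continuous `Ψ : X → ℕ^ℕ` gives the increasing open cover
`{Ψ · k ≤ m}` (`m ∈ ℕ`) of `X`; conversely, in a zero-dimensional Lindelöf space every open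
cover is refined by a sequence of clopen sets `V m`, and `x ↦ min {m | x ∈ V m}` is continuous.
Through this dictionary, choosing finitely many members of the `k`-th cover is choosing a bound
`b k`, and the selected unions form an ω-cover exactly when for every finite `F ⊆ X` the maximum
of `Ψ[F]` lies below `b` at some coordinate, i.e. when `b` witnesses that `maxfin (Ψ[X])` is not
dominating. The alternative `⋃ F_n = X` of `Ufin(O,Ω)` is excluded as follows: if
`maxfin (Ψ[X])` is dominating, almost all coordinates of `Ψ` are unbounded, so the corresponding
covers have no finite subcovers, and then an ω-cover contains each finite set in infinitely many
of its members.
-/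

open Set

variable {α : Type*}

lemma mem_maxfin_range_iff {Ψ : α → ℕ → ℕ} {g : ℕ → ℕ} :
    g ∈ maxfin (range Ψ) ↔ ∃ F : Finset α, F.Nonempty ∧ g = fun n => F.sup fun x => Ψ x n := by
  classical
  constructor
  · rintro ⟨G, hG, hGΨ, rfl⟩
    rw [← image_univ, Finset.subset_set_image_iff] at hGΨ
    obtain ⟨F, -, rfl⟩ := hGΨ
    exact ⟨F, Finset.image_nonempty.mp hG, by simp only [Finset.sup_image]; rfl⟩
  · rintro ⟨F, hF, rfl⟩
    refine ⟨F.image Ψ, hF.image Ψ, by simp, ?_⟩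
    simp only [Finset.sup_image]
    rfl

lemma Dominating.eventually_unbounded {Ψ : α → ℕ → ℕ} (hD : Dominating (maxfin (range Ψ))) :
    ∀ᶠ k in atTop, ∀ m, ∃ x, m < Ψ x k := by
  by_contra hfreq
  simp only [not_eventually, not_forall, not_exists, not_lt] at hfreq
  have hbound : ∀ k, ∃ c, (∃ m, ∀ x, Ψ x k ≤ m) → ∀ x, Ψ x k ≤ c := fun k => by
    by_cases hk : ∃ m, ∀ x, Ψ x k ≤ m
    · exact hk.imp fun _ hm _ => hm
    · exact ⟨0, fun h => absurd h hk⟩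
  choose c hc using hbound
  obtain ⟨f, hf, hcf⟩ := hD fun k => c k + 1
  obtain ⟨F, -, rfl⟩ := mem_maxfin_range_iff.mp hf
  obtain ⟨k, hbdd, hk⟩ := (hfreq.and_eventually hcf).exists
  exact (Nat.lt_succ_self _).not_ge (hk.trans (Finset.sup_le fun x _ => hc k hbdd x))

lemma IsOmegaCover.infinite_setOf_subset {V : ℕ → Set α} (hV : IsOmegaCover {s | ∃ n, s = V n})
    (hne : ∀ n, V n ≠ univ) {F : Set α} (hF : F.Finite) : {n | F ⊆ V n}.Infinite := by
  intro hfin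
  -- some `V m` contains `F` and a chosen point outside every `V n ⊇ F`, including its own
  choose x hx using fun n => (ne_univ_iff_exists_notMem (V n)).mp (hne n)
  obtain ⟨_, ⟨m, rfl⟩, hsub⟩ := hV.2 (F ∪ x '' {n | F ⊆ V n}) (hF.union (hfin.image x))
  exact hx m (hsub (Or.inr ⟨m, subset_union_left.trans hsub, rfl⟩))

lemma isOmegaCover_of_forall_finite {V : ℕ → Set α} (h : ∀ F : Set α, F.Finite → ∃ n, F ⊆ V n) :
    IsOmegaCover {s | ∃ n, s = V n} := by
  refine ⟨eq_univ_of_forall fun x => ?_, fun F hF => ?_⟩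
  · obtain ⟨n, hn⟩ := h {x} (finite_singleton x)
    exact ⟨V n, ⟨n, rfl⟩, hn rfl⟩
  · obtain ⟨n, hn⟩ := h F hF
    exact ⟨V n, ⟨n, rfl⟩, hn⟩

lemma Monotone.exists_sUnion_subset {U : ℕ → Set α} (hU : Monotone U) {ℱ : Set (Set α)}
    (hℱ : ℱ.Finite) (hsub : ℱ ⊆ range U) : ∃ m, ⋃₀ ℱ ⊆ U m := by
  obtain ⟨t, -, ht, rfl⟩ := exists_subset_image_finite_and (p := fun s => s = ℱ) |>.mp
    ⟨ℱ, image_univ.symm ▸ hsub, hℱ, rfl⟩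
  obtain ⟨m, hm⟩ := ht.bddAbove
  exact ⟨m, sUnion_subset (forall_mem_image.2 fun k hk => hU (hm hk))⟩

section Topology

variable [TopologicalSpace α]

lemma UfinOOmega.exists_infinite_setOf_subset (h : UfinOOmega α) {U : ℕ → ℕ → Set α}
    (hopen : ∀ n m, IsOpen (U n m)) (hmono : ∀ n, Monotone (U n))
    (hcover : ∀ n x, ∃ m, x ∈ U n m) (hproper : ∀ n m, U n m ≠ univ) :
    ∃ g : ℕ → ℕ, ∀ F : Set α, F.Finite → {n | F ⊆ U n (g n)}.Infinite := by
  have h𝒰 : ∀ n, (range (U n)).Countable ∧ IsOpenCover (range (U n)) := fun n =>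
    ⟨countable_range _, forall_mem_range.2 (hopen n),
      eq_univ_of_forall fun x => ⟨_, mem_range_self _, (hcover n x).choose_spec⟩⟩
  obtain ⟨ℱ, hℱ, hcov⟩ := h _ h𝒰
  choose g hg using fun n => (hmono n).exists_sUnion_subset (hℱ n).1 (hℱ n).2
  have hne : ∀ n, ⋃₀ ℱ n ≠ univ := fun n hn =>
    hproper n (g n) (univ_subset_iff.mp (hn ▸ hg n))
  rcases hcov with ⟨n, hn⟩ | hΩ
  · exact absurd hn (hne n)
  · exact ⟨g, fun F hF => (hΩ.infinite_setOf_subset hne hF).mono fun n hn => hn.trans (hg n)⟩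

theorem UfinOOmega.not_dominating_maxfin_range (h : UfinOOmega α) {Ψ : α → ℕ → ℕ}
    (hΨ : Continuous Ψ) : ¬ Dominating (maxfin (range Ψ)) := by
  intro hD
  obtain ⟨N, hN⟩ := eventually_atTop.mp hD.eventually_unbounded
  obtain ⟨g, hg⟩ := h.exists_infinite_setOf_subset (U := fun n m => {x | Ψ x (n + N) ≤ m})
    (fun n m => (isOpen_discrete (Iic m)).preimage ((continuous_apply _).comp hΨ))
    (fun n m m' hmm' x hx => le_trans hx hmm') (fun n x => ⟨Ψ x (n + N), le_refl (Ψ x (n + N))⟩)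
    (fun n m hm => by
      obtain ⟨x, hx⟩ := hN (n + N) le_add_self m
      exact hx.not_ge (eq_univ_iff_forall.mp hm x))
  obtain ⟨f, hf, hgf⟩ := hD fun k => g (k - N) + 1
  obtain ⟨F, -, rfl⟩ := mem_maxfin_range_iff.mp hf
  obtain ⟨M, hM⟩ := eventually_atTop.mp hgf
  obtain ⟨n, hnF, hnM⟩ := (hg _ F.finite_toSet).exists_gt M
  have hle : g n + 1 ≤ F.sup fun x => Ψ x (n + N) := by
    simpa using hM (n + N) (by omega)
  exact (Nat.lt_succ_self _).not_ge (hle.trans (Finset.sup_le fun x hx => hnF hx))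

lemma exists_clopen_seq_of_isOpenCover [LindelofSpace α] [Nonempty α] {B : Set (Set α)}
    (hB : TopologicalSpace.IsTopologicalBasis B) (hBc : ∀ b ∈ B, IsClopen b)
    {𝒰 : Set (Set α)} (h𝒰 : IsOpenCover 𝒰) :
    ∃ V : ℕ → Set α, (∀ m, IsClopen (V m)) ∧ (∀ m, ∃ u ∈ 𝒰, V m ⊆ u) ∧ ∀ x, ∃ m, x ∈ V m := by
  have hx : ∀ x, ∃ b ∈ B, x ∈ b ∧ ∃ u ∈ 𝒰, b ⊆ u := fun x => by
    obtain ⟨u, hu, hxu⟩ := mem_sUnion.mp (h𝒰.2.symm ▸ mem_univ x)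
    obtain ⟨b, hb, hxb, hbu⟩ := hB.exists_subset_of_mem_open hxu (h𝒰.1 u hu)
    exact ⟨b, hb, hxb, u, hu, hbu⟩
  choose b hbB hxb hbU using hx
  obtain ⟨f, hf⟩ := isLindelof_univ.indexed_countable_subcover b
    (fun x => (hBc _ (hbB x)).isOpen) fun x _ => mem_iUnion.2 ⟨x, hxb x⟩
  exact ⟨b ∘ f, fun m => hBc _ (hbB _), fun m => hbU _, fun x => mem_iUnion.mp (hf (mem_univ x))⟩

lemma exists_continuous_mem_of_isClopen_s2 {V : ℕ → Set α} (hV : ∀ m, IsClopen (V m))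
    (hcov : ∀ x, ∃ m, x ∈ V m) : ∃ Ψ : α → ℕ, Continuous Ψ ∧ ∀ x, x ∈ V (Ψ x) := by
  classical
  refine ⟨fun x => Nat.find (hcov x), continuous_discrete_rng.mpr fun m => ?_,
    fun x => Nat.find_spec (hcov x)⟩
  have hpre : (fun x => Nat.find (hcov x)) ⁻¹' {m} = V m ∩ ⋂ k ∈ Iio m, (V k)ᶜ := by
    ext x
    simp [Nat.find_eq_iff]
  rw [hpre]
  exact (hV m).isOpen.inter ((finite_Iio m).isOpen_biInter fun k _ => (hV k).isClosed.isOpen_compl)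

lemma exists_bound_of_forall_not_dominating {V : ℕ → ℕ → Set α} (hV : ∀ n m, IsClopen (V n m))
    (hcov : ∀ n x, ∃ m, x ∈ V n m)
    (h : ∀ Ψ : α → ℕ → ℕ, Continuous Ψ → ¬ Dominating (maxfin (range Ψ))) :
    ∃ b : ℕ → ℕ, ∀ F : Set α, F.Finite → ∃ n, F ⊆ ⋃ m < b n, V n m := by
  choose Ψ hΨ hΨV using fun n => exists_continuous_mem_of_isClopen_s2 (hV n) (hcov n)
  have hb := h (fun x n => Ψ n x) (continuous_pi hΨ)
  simp only [Dominating, not_forall, not_exists, not_and] at hb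
  obtain ⟨b, hb⟩ := hb
  refine ⟨b, fun F hF => ?_⟩
  rcases F.eq_empty_or_nonempty with rfl | hne
  · exact ⟨0, empty_subset _⟩
  obtain ⟨n, hn⟩ := (not_eventually.mp (hb _ (mem_maxfin_range_iff.mpr
    ⟨hF.toFinset, hF.toFinset_nonempty.mpr hne, rfl⟩))).exists
  refine ⟨n, fun x hx => mem_iUnion₂.mpr ⟨Ψ n x, ?_, hΨV n x⟩⟩
  exact (Finset.le_sup (f := fun x => Ψ n x) (hF.mem_toFinset.mpr hx)).trans_lt (not_le.mp hn)

theorem ufinOOmega_of_forall_not_dominating [LindelofSpace α] {B : Set (Set α)}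
    (hB : TopologicalSpace.IsTopologicalBasis B) (hBc : ∀ b ∈ B, IsClopen b)
    (h : ∀ Ψ : α → ℕ → ℕ, Continuous Ψ → ¬ Dominating (maxfin (range Ψ))) : UfinOOmega α := by
  intro 𝒰 h𝒰
  cases isEmpty_or_nonempty α
  · exact ⟨fun _ => ∅, fun _ => ⟨finite_empty, empty_subset _⟩,
      Or.inl ⟨0, eq_univ_of_forall isEmptyElim⟩⟩
  choose V hVc hV𝒰 hVcov using fun n => exists_clopen_seq_of_isOpenCover hB hBc (h𝒰 n).2
  choose u hu hVu using hV𝒰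
  obtain ⟨b, hb⟩ := exists_bound_of_forall_not_dominating hVc hVcov h
  refine ⟨fun n => u n '' Iio (b n),
    fun n => ⟨(finite_Iio _).image _, image_subset_iff.2 fun m _ => hu n m⟩,
    Or.inr (isOmegaCover_of_forall_finite fun F hF => ?_)⟩
  obtain ⟨n, hn⟩ := hb F hF
  exact ⟨n, hn.trans (iUnion₂_subset fun m hm =>
    (hVu n m).trans (subset_sUnion_of_mem (mem_image_of_mem _ hm)))⟩

end Topology

/-- A zero-dimensional set of reals satisfies `Ufin(O,Ω)` iff for every
continuous image `Ψ[X]` in the Baire space, `maxfin(Ψ[X])` is not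
dominating. -/
theorem ufinOOmega_iff_maxfin_not_dominating (X : Set ℝ)
    (hX : ZeroDimensionalSet X) :
    UfinOOmega ↥X ↔
      ∀ Ψ : ↥X → (ℕ → ℕ), Continuous Ψ → ¬ Dominating (maxfin (Set.range Ψ)) := by
  obtain ⟨B, hB, hBc⟩ := hX
  exact ⟨fun h _ hΨ => h.not_dominating_maxfin_range hΨ,
    ufinOOmega_of_forall_not_dominating hB hBc⟩
end

section
/- For any subset Y of ℕ^ℕ, the set maxfin(Y) is dominating if, and only if, there exists a natural number k such that Y is k-dominating. -/
open Filter

/-!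
A `k`-dominating `Y` makes `maxfin Y` dominating, since a maximum of `k` members of `Y` lies in
`maxfin Y`. Conversely, if `Y` is not `k`-dominating for any `k`, pick `f k` that no maximum of
`k` members of `Y` eventually dominates, and let `F` eventually dominate every `f k`. If
`max S ∈ maxfin Y` eventually dominates `F`, then `S` is a tuple of `S.card` members of `Y` whose
maximum eventually dominates `f S.card`, a contradiction.
-/

theorem EvLE.trans {f g h : ℕ → ℕ} (hfg : EvLE f g) (hgh : EvLE g h) : EvLE f h :=
  (hfg.and hgh).mono fun _ hn => hn.1.trans hn.2

theorem boundedStar_range (f : ℕ → ℕ → ℕ) : BoundedStar (Set.range f) := by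
  refine ⟨fun n => (Finset.range (n + 1)).sup (f · n), ?_⟩
  rintro _ ⟨k, rfl⟩
  filter_upwards [eventually_ge_atTop k] with n hkn
  exact Finset.le_sup (f := (f · n)) (Finset.mem_range_succ_iff.mpr hkn)

theorem Finset.exists_fin_sup_comp_eq {α β : Type*} [SemilatticeSup α] [OrderBot α]
    (S : Finset β) :
    ∃ g : Fin S.card → β, (∀ i, g i ∈ S) ∧ ∀ f : β → α, univ.sup (f ∘ g) = S.sup f := by
  refine ⟨fun i => S.equivFin.symm i, fun i => (S.equivFin.symm i).2, fun f => ?_⟩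
  rw [← S.sup_attach, ← univ_eq_attach, ← univ_map_equiv_to_embedding S.equivFin.symm, sup_map]
  rfl

theorem not_kDominating_zero (Y : Set (ℕ → ℕ)) : ¬ KDominating Y 0 := by
  intro h
  obtain ⟨g, -, hg⟩ := h fun _ => 1
  obtain ⟨n, hn⟩ := hg.exists
  simp at hn

theorem sup_mem_maxfin {Y : Set (ℕ → ℕ)} {k : ℕ} [NeZero k] {g : Fin k → ℕ → ℕ}
    (hg : ∀ i, g i ∈ Y) : (fun n => Finset.univ.sup (g · n)) ∈ maxfin Y := by
  classical
  refine ⟨Finset.univ.image g, Finset.univ_nonempty.image g, ?_, ?_⟩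
  · simpa [Set.range_subset_iff] using hg
  · funext n
    rw [Finset.sup_image]
    rfl

theorem KDominating.dominating_maxfin {Y : Set (ℕ → ℕ)} {k : ℕ} (h : KDominating Y k) :
    Dominating (maxfin Y) := by
  cases k with
  | zero => exact absurd h (not_kDominating_zero Y)
  | succ k =>
    intro f
    obtain ⟨g, hgY, hfg⟩ := h f
    exact ⟨_, sup_mem_maxfin hgY, hfg⟩

/-- `maxfin Y` is dominating iff `Y` is `k`-dominating for some natural
number `k`. -/
theorem maxfin_dominating_iff_kDominating (Y : Set (ℕ → ℕ)) :
    Dominating (maxfin Y) ↔ ∃ k : ℕ, KDominating Y k := by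
  refine ⟨fun hD => ?_, fun ⟨_, hk⟩ => hk.dominating_maxfin⟩
  by_contra! hY
  choose f hf using fun k => not_forall.mp (hY k)
  obtain ⟨F, hF⟩ := boundedStar_range f
  obtain ⟨_, ⟨S, -, hSY, rfl⟩, hFS⟩ := hD F
  obtain ⟨g, hgS, hg⟩ := S.exists_fin_sup_comp_eq (α := ℕ)
  refine hf S.card ⟨g, fun i => hSY (hgS i), ?_⟩
  exact ((hF _ ⟨_, rfl⟩).trans hFS).mono fun n hn => hn.trans (hg (· n)).ge
end

section
/- Let Y ⊆ ℕ^ℕ be such that for each n ∈ ℕ the set {h(n) : h ∈ Y} is infinite. Then the following are equivalent: (1) maxfin(Y) is not a dominating family; (2) there is a non-principal filter F on ℕ such that the set {[f]_F : f ∈ Y} is bounded in the reduced product ℕ^ℕ/F, i.e., there exists g ∈ ℕ^ℕ such that for every f ∈ Y the set {n : f(n) < g(n)} belongs to F. -/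
/-!
A witness `g` to the failure of domination of `maxfin Y` is exactly a function such that, for
every finite `s ⊆ Y`, infinitely many `n` satisfy `f n < g n` for all `f ∈ s`. These sets form a
directed family of infinite sets, so together with the cofinite filter they generate a proper
filter below the cofinite filter, which is therefore non-principal. Conversely, a filter with a
finite member is principal, and a filter containing every `{n | f n < g n}` with `f ∈ Y`
contains their finite intersections.
-/

open Filter

namespace Filter

variable {α : Type*}

theorem exists_eq_principal_of_finite_mem {F : Filter α} {A : Set α} (hA : A.Finite)
    (hAF : A ∈ F) : ∃ S, F = 𝓟 S := by
  have : Finite A := hA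
  obtain ⟨S, hS⟩ := eq_principal_of_finite (comap ((↑) : A → α) F)
  refine ⟨(↑) '' S, ?_⟩
  rw [← map_principal, ← hS, map_comap_of_mem (by rwa [Subtype.range_coe])]

theorem ne_principal_of_le_cofinite {F : Filter α} [F.NeBot] (hF : F ≤ cofinite) (S : Set α) :
    F ≠ 𝓟 S := by
  rintro rfl
  obtain ⟨m, hm⟩ := principal_neBot_iff.mp ‹(𝓟 S).NeBot›
  exact mem_principal.mp (le_cofinite_iff_compl_singleton_mem.mp hF m) hm rfl

theorem exists_neBot_le_cofinite_of_directed {ι : Type*} [Nonempty ι] {A : ι → Set α}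
    (hdir : Directed (· ⊇ ·) A) (hinf : ∀ i, (A i).Infinite) :
    ∃ F : Filter α, F.NeBot ∧ F ≤ cofinite ∧ ∀ i, A i ∈ F := by
  refine ⟨⨅ i, cofinite ⊓ 𝓟 (A i), ?_, iInf_le_of_le (Classical.arbitrary ι) inf_le_left,
    fun i => mem_iInf_of_mem i (mem_inf_of_right (mem_principal_self _))⟩
  refine iInf_neBot_of_directed' (hdir.mono_comp (g := fun B => cofinite ⊓ 𝓟 B) _
    fun _ _ h => inf_le_inf_left _ (principal_mono.mpr h)) fun i => ?_
  rw [← frequently_mem_iff_neBot, frequently_cofinite_iff_infinite]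
  exact hinf i

end Filter

theorem not_dominating_maxfin_iff {Y : Set (ℕ → ℕ)} :
    ¬ Dominating (maxfin Y) ↔
      ∃ g : ℕ → ℕ, ∀ s : Finset (ℕ → ℕ), ↑s ⊆ Y → {n | ∀ f ∈ s, f n < g n}.Infinite := by
  have sup_lt_iff {s : Finset (ℕ → ℕ)} (hs : s.Nonempty) {g : ℕ → ℕ} {n : ℕ} :
      s.sup (· n) < g n ↔ ∀ f ∈ s, f n < g n := by
    rw [← Finset.sup'_eq_sup hs, Finset.sup'_lt_iff]
  simp only [Dominating, EvLE, not_forall, not_exists, not_and, not_eventually, not_le,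
    Nat.frequently_atTop_iff_infinite]
  refine exists_congr fun g => ⟨fun hg s hsY => ?_, fun hg _ ⟨s, hs, hsY, hmax⟩ => ?_⟩
  · rcases s.eq_empty_or_nonempty with rfl | hs
    · simpa using Set.infinite_univ
    · simpa only [sup_lt_iff hs] using hg _ ⟨s, hs, hsY, rfl⟩
  · simpa only [hmax, sup_lt_iff hs] using hg s hsY

theorem maxfin_not_dominating_iff_bounded_in_reduced_product_general
    (Y : Set (ℕ → ℕ)) :
    ¬ Dominating (maxfin Y) ↔
      ∃ F : Filter ℕ, (∅ : Set ℕ) ∉ F ∧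
        (¬ ∃ S : Set ℕ, F = Filter.principal S) ∧
        ∃ g : ℕ → ℕ, ∀ f ∈ Y, {n : ℕ | f n < g n} ∈ F := by
  classical
  rw [not_dominating_maxfin_iff]
  constructor
  · rintro ⟨g, hg⟩
    have : Nonempty {s : Finset (ℕ → ℕ) // ↑s ⊆ Y} := ⟨⟨∅, by simp⟩⟩
    obtain ⟨F, hF, hFcof, hAF⟩ := exists_neBot_le_cofinite_of_directed
      (A := fun s : {s : Finset (ℕ → ℕ) // ↑s ⊆ Y} => {n | ∀ f ∈ s.1, f n < g n})
      (fun s t => ⟨⟨s.1 ∪ t.1, by simp [s.2, t.2]⟩, by simp +contextual [Set.subset_def]⟩)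
      fun s => hg s.1 s.2
    refine ⟨F, empty_mem_iff_bot.not.mpr hF.ne,
      fun ⟨S, hS⟩ => ne_principal_of_le_cofinite hFcof S hS, g, fun f hf => ?_⟩
    simpa using hAF ⟨{f}, by simpa using hf⟩
  · rintro ⟨F, -, hnp, g, hg⟩
    refine ⟨g, fun s hsY => by_contra fun hfin => hnp ?_⟩
    exact exists_eq_principal_of_finite_mem (Set.not_infinite.mp hfin)
      ((eventually_all_finset s).mpr fun f hf => hg f (hsY hf))

/-- For `Y ⊆ ℕ^ℕ` with all vertical sections `{h(n) : h ∈ Y}` infinite: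
`maxfin Y` is not dominating iff there is a non-principal (proper) filter
`F` on `ℕ` such that `{[f]_F : f ∈ Y}` is bounded in `ℕ^ℕ/F`. -/
theorem maxfin_not_dominating_iff_bounded_in_reduced_product
    (Y : Set (ℕ → ℕ)) (hY : ∀ n : ℕ, {k : ℕ | ∃ h ∈ Y, h n = k}.Infinite) :
    ¬ Dominating (maxfin Y) ↔
      ∃ F : Filter ℕ, (∅ : Set ℕ) ∉ F ∧
        (¬ ∃ S : Set ℕ, F = Filter.principal S) ∧
        ∃ g : ℕ → ℕ, ∀ f ∈ Y, {n : ℕ | f n < g n} ∈ F :=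
  maxfin_not_dominating_iff_bounded_in_reduced_product_general Y
end

section
/- Let X be a zero-dimensional set of reals. Then X satisfies Ufin(O,Ω) if, and only if, for every continuous function Ψ : X → ℕ^ℕ, either there is a principal filter G on ℕ for which the reduced product image Ψ[X]/G (the set of ∼_G-equivalence classes of elements of Ψ[X]) is finite, or else there is a non-principal filter F on ℕ such that the set {[f]_F : f ∈ Ψ[X]} is bounded in the reduced product ℕ^ℕ/F, i.e., there exists g ∈ ℕ^ℕ such that for every f ∈ Ψ[X] the set {n : f(n) < g(n)} belongs to F. -/
open Filter

/-! A sequence of countable open covers of a zero-dimensional `X` refines to clopen covers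
`(W n m)ₘ`, and `Ψ x n := min {m | x ∈ W n m}` is continuous; conversely a continuous `Ψ` gives
the increasing open covers `({x | Ψ x n ≤ m})ₘ`. Either way, finite selections from the covers
amount to a `g : ℕ → ℕ`, and `Ufin(O,Ω)` becomes: for each continuous `Ψ` there is `g` such that
every finite subset of `Ψ[X]` lies below `g` at some coordinate. Such a `g` either bounds all of
`Ψ[X]` at one coordinate `b`, and then `Ψ[X]` has finitely many classes modulo the principal
filter at `b`; or the sets `{n | f n ≤ g n}`, `f ∈ Ψ[X]`, have infinite finite intersections,
so together with the cofinite sets they generate a non-principal filter modulo which `g + 1`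
bounds `Ψ[X]`. -/

open Set TopologicalSpace

variable {α β γ ι : Type*}

theorem infinite_biInter_of_iInter_eq_empty {s : ι → Set β}
    (hne : ∀ A : Finset ι, (⋂ i ∈ A, s i).Nonempty) (hempty : ⋂ i, s i = ∅) (A : Finset ι) :
    (⋂ i ∈ A, s i).Infinite := by
  classical
  intro hfin
  have hmiss : ∀ n, ∃ i, n ∉ s i := by
    simpa only [eq_empty_iff_forall_notMem, mem_iInter, not_forall] using hempty
  choose j hj using hmiss
  obtain ⟨n, hn⟩ := hne (A ∪ hfin.toFinset.image j)
  have hnA : n ∈ ⋂ i ∈ A, s i :=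
    mem_iInter₂.2 fun i hi => mem_iInter₂.1 hn i (Finset.mem_union_left _ hi)
  exact hj n <| mem_iInter₂.1 hn (j n) <|
    Finset.mem_union_right _ (Finset.mem_image_of_mem j (hfin.mem_toFinset.2 hnA))

theorem exists_neBot_le_cofinite_forall_mem {s : ι → Set β}
    (hs : ∀ A : Finset ι, (⋂ i ∈ A, s i).Infinite) :
    ∃ F : Filter β, F.NeBot ∧ F ≤ cofinite ∧ ∀ i, s i ∈ F := by
  have hanti : Antitone fun A : Finset ι => cofinite ⊓ 𝓟 (⋂ i ∈ A, s i) := fun A B hAB =>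
    inf_le_inf_left _ (principal_mono.2 (biInter_subset_biInter_left hAB))
  refine ⟨⨅ A : Finset ι, cofinite ⊓ 𝓟 (⋂ i ∈ A, s i),
    iInf_neBot_of_directed' hanti.directed_ge fun A => (hs A).cofinite_inf_principal_neBot,
    iInf_le_of_le ∅ inf_le_left, fun i => mem_iInf_of_mem {i} (mem_inf_of_right ?_)⟩
  simp

theorem not_exists_principal_eq_of_le_cofinite {F : Filter β} [hF : F.NeBot]
    (h : F ≤ cofinite) : ¬ ∃ S, F = 𝓟 S := by
  rintro ⟨S, rfl⟩
  rw [le_cofinite_iff_ker, ker_principal] at h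
  subst h
  exact hF.ne principal_empty

theorem setOf_mem_principal_eq_domRestrict (f : β → γ) (S : Set β) :
    {g | {n | f n = g n} ∈ 𝓟 S} = {g | S.domRestrict g = S.domRestrict f} := by
  ext g
  simp [subset_def, funext_iff, eq_comm]

theorem finite_classes_principal_iff (Ψ : ι → β → γ) (S : Set β) :
    {C : Set (β → γ) | ∃ f ∈ range Ψ, C = {g | {n | f n = g n} ∈ 𝓟 S}}.Finite ↔
      (range fun x => S.domRestrict (Ψ x)).Finite := by
  have hclasses : {C : Set (β → γ) | ∃ f ∈ range Ψ, C = {g | {n | f n = g n} ∈ 𝓟 S}} =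
      (fun r : S → γ => {g : β → γ | S.domRestrict g = r}) ''
        range fun x => S.domRestrict (Ψ x) := by
    ext C
    simp only [setOf_mem_principal_eq_domRestrict]
    simp [eq_comm, eqOn_comm]
  rw [hclasses, finite_image_iff]
  rintro _ ⟨x, rfl⟩ r' - hrr'
  exact (congrArg (Ψ x ∈ ·) hrr').mp rfl

theorem exists_principal_finite_classes_iff (Ψ : ι → β → γ) :
    (∃ G : Filter β, (∅ : Set β) ∉ G ∧ (∃ S : Set β, G = 𝓟 S) ∧
        {C : Set (β → γ) | ∃ f ∈ range Ψ, C = {g | {n | f n = g n} ∈ G}}.Finite) ↔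
      ∃ b, (range fun x => Ψ x b).Finite := by
  constructor
  · rintro ⟨_, hG, ⟨S, rfl⟩, hfin⟩
    obtain ⟨b, hb⟩ : S.Nonempty := nonempty_iff_ne_empty.2 fun hS => hG (by simp [hS])
    refine ⟨b, ((finite_classes_principal_iff Ψ S).1 hfin |>.image fun r => r ⟨b, hb⟩).subset ?_⟩
    rintro _ ⟨x, rfl⟩
    exact ⟨_, ⟨x, rfl⟩, rfl⟩
  · rintro ⟨b, hfin⟩
    refine ⟨𝓟 {b}, by simp, ⟨{b}, rfl⟩, (finite_classes_principal_iff Ψ {b}).2 ?_⟩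
    refine (hfin.image fun v (_ : ({b} : Set β)) => v).subset ?_
    rintro _ ⟨x, rfl⟩
    refine ⟨Ψ x b, ⟨x, rfl⟩, funext fun ⟨_, hi⟩ => ?_⟩
    obtain rfl := mem_singleton_iff.1 hi
    rfl

/-- The sets `{x | Ψ x n ≤ g n}`, `n : β`, form an ω-cover of `ι`. -/
def OmegaBoundedBy (Ψ : ι → β → ℕ) (g : β → ℕ) : Prop :=
  ∀ A : Finset ι, ∃ n, ∀ x ∈ A, Ψ x n ≤ g n

theorem exists_omegaBoundedBy_of_finite_range {Ψ : ι → β → ℕ} {b : β}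
    (hb : (range fun x => Ψ x b).Finite) : ∃ g, OmegaBoundedBy Ψ g := by
  obtain ⟨M, hM⟩ := hb.bddAbove
  exact ⟨fun _ => M, fun _ => ⟨b, fun x _ => hM ⟨x, rfl⟩⟩⟩

theorem omegaBoundedBy_of_eventually_lt {Ψ : ι → β → ℕ} {g : β → ℕ} (F : Filter β) [F.NeBot]
    (hg : ∀ x, ∀ᶠ n in F, Ψ x n < g n) : OmegaBoundedBy Ψ g := fun A =>
  ((A.eventually_all.2 fun x _ => hg x).exists).imp fun _ hn x hx => (hn x hx).le

theorem OmegaBoundedBy.exists_free_filter {Ψ : ι → β → ℕ} {g : β → ℕ} (hg : OmegaBoundedBy Ψ g)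
    (hunbdd : ∀ b, ∃ x, g b < Ψ x b) :
    ∃ F : Filter β, F.NeBot ∧ F ≤ cofinite ∧ ∀ x, ∀ᶠ n in F, Ψ x n ≤ g n := by
  refine exists_neBot_le_cofinite_forall_mem (s := fun x => {n | Ψ x n ≤ g n})
    (infinite_biInter_of_iInter_eq_empty (fun A => ?_) ?_)
  · obtain ⟨n, hn⟩ := hg A
    exact ⟨n, mem_iInter₂.2 hn⟩
  · refine eq_empty_iff_forall_notMem.2 fun n hn => ?_
    obtain ⟨x, hx⟩ := hunbdd n
    exact (mem_iInter.1 hn x).not_gt hx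

theorem exists_omegaBoundedBy_iff (Ψ : ι → β → ℕ) :
    (∃ g, OmegaBoundedBy Ψ g) ↔
      (∃ b, (range fun x => Ψ x b).Finite) ∨
        ∃ F : Filter β, (∅ : Set β) ∉ F ∧ (¬ ∃ S : Set β, F = 𝓟 S) ∧
          ∃ g : β → ℕ, ∀ f ∈ range Ψ, {n | f n < g n} ∈ F := by
  constructor
  · rintro ⟨g, hg⟩
    by_cases hbdd : ∃ b, ∀ x, Ψ x b ≤ g b
    · obtain ⟨b, hb⟩ := hbdd
      exact Or.inl ⟨b, (finite_Iic (g b)).subset (range_subset_iff.2 hb)⟩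
    · push Not at hbdd
      obtain ⟨F, hF, hcof, hle⟩ := hg.exists_free_filter hbdd
      refine Or.inr ⟨F, F.empty_notMem, not_exists_principal_eq_of_le_cofinite hcof, g + 1, ?_⟩
      rintro _ ⟨x, rfl⟩
      exact (hle x).mono fun n hn => Nat.lt_succ_of_le hn
  · rintro (⟨b, hb⟩ | ⟨F, hF, -, g, hg⟩)
    · exact exists_omegaBoundedBy_of_finite_range hb
    · have : F.NeBot := ⟨fun h => hF (empty_mem_iff_bot.2 h)⟩
      exact ⟨g, omegaBoundedBy_of_eventually_lt F fun x => hg _ ⟨x, rfl⟩⟩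

theorem exists_eq_univ_or_isOmegaCover_iff (V : ι → Set α) :
    ((∃ n, V n = univ) ∨ IsOmegaCover {s | ∃ n, s = V n}) ↔ ∀ A : Finset α, ∃ n, ↑A ⊆ V n := by
  constructor
  · rintro (⟨n, hn⟩ | ⟨-, hω⟩) A
    · exact ⟨n, hn ▸ subset_univ _⟩
    · obtain ⟨_, ⟨n, rfl⟩, hA⟩ := hω A A.finite_toSet
      exact ⟨n, hA⟩
  · refine fun h => Or.inr ⟨eq_univ_of_forall fun x => ?_, fun A hA => ?_⟩
    · obtain ⟨n, hn⟩ := h {x}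
      exact ⟨V n, ⟨n, rfl⟩, hn (Finset.mem_coe.2 (Finset.mem_singleton_self x))⟩
    · obtain ⟨n, hn⟩ := h hA.toFinset
      exact ⟨V n, ⟨n, rfl⟩, by simpa using hn⟩

theorem Set.Finite.exists_sUnion_subset_of_subset_range [Preorder ι] [IsDirected ι (· ≤ ·)]
    [Nonempty ι] {U : ι → Set α} (hU : Monotone U) {ℱ : Set (Set α)} (hℱ : ℱ.Finite)
    (hsub : ℱ ⊆ range U) : ∃ M, ⋃₀ ℱ ⊆ U M := by
  obtain ⟨t, -, ht, rfl⟩ := exists_subset_image_finite_and.1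
    ⟨ℱ, image_univ (f := U) ▸ hsub, hℱ, rfl⟩
  obtain ⟨M, hM⟩ := ht.bddAbove
  exact ⟨M, sUnion_image U t ▸ iUnion₂_subset fun m hm => hU (hM hm)⟩

section Topology

variable [TopologicalSpace α]

theorem ufinOOmega_iff :
    UfinOOmega α ↔ ∀ 𝒰 : ℕ → Set (Set α), (∀ n, (𝒰 n).Countable ∧ IsOpenCover (𝒰 n)) →
      ∃ ℱ : ℕ → Set (Set α), (∀ n, (ℱ n).Finite ∧ ℱ n ⊆ 𝒰 n) ∧
        ∀ A : Finset α, ∃ n, ↑A ⊆ ⋃₀ ℱ n :=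
  forall₂_congr fun _ _ => exists_congr fun ℱ => and_congr_right fun _ =>
    exists_eq_univ_or_isOmegaCover_iff fun n => ⋃₀ ℱ n

theorem UfinOOmega.exists_forall_finset_subset (hU : UfinOOmega α) {U : ℕ → ℕ → Set α}
    (hUo : ∀ n m, IsOpen (U n m)) (hmono : ∀ n, Monotone (U n)) (hcov : ∀ n x, ∃ m, x ∈ U n m) :
    ∃ g : ℕ → ℕ, ∀ A : Finset α, ∃ n, ↑A ⊆ U n (g n) := by
  obtain ⟨ℱ, hℱ, hA⟩ := ufinOOmega_iff.1 hU (fun n => range (U n)) fun n =>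
    ⟨countable_range _, forall_mem_range.2 (hUo n),
      eq_univ_of_forall fun x => (hcov n x).elim fun m hm => ⟨U n m, ⟨m, rfl⟩, hm⟩⟩
  choose g hg using fun n => (hℱ n).1.exists_sUnion_subset_of_subset_range (hmono n) (hℱ n).2
  exact ⟨g, fun A => (hA A).imp fun n hn => hn.trans (hg n)⟩

theorem UfinOOmega.exists_omegaBoundedBy (hU : UfinOOmega α) {Ψ : α → ℕ → ℕ}
    (hΨ : Continuous Ψ) : ∃ g, OmegaBoundedBy Ψ g := by
  obtain ⟨g, hg⟩ := hU.exists_forall_finset_subset (U := fun n m => {x | Ψ x n ≤ m})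
    (fun n m => (isOpen_discrete (Iic m)).preimage ((continuous_apply n).comp hΨ))
    (fun _ _ _ hab _ hx => le_trans hx hab) (fun n x => ⟨Ψ x n, le_refl (Ψ x n)⟩)
  exact ⟨g, fun A => (hg A).imp fun _ hn x hx => hn hx⟩

open scoped Classical in
theorem continuous_nat_find_of_isClopen {W : ℕ → Set α} (hW : ∀ m, IsClopen (W m))
    (hcov : ∀ x, ∃ m, x ∈ W m) : Continuous fun x => Nat.find (hcov x) := by
  refine continuous_discrete_rng.2 fun k => ?_
  have hfiber : (fun x => Nat.find (hcov x)) ⁻¹' {k} = W k ∩ ⋂ j ∈ Finset.range k, (W j)ᶜ := by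
    ext x
    simp [Nat.find_eq_iff]
  rw [hfiber]
  exact (hW k).isOpen.inter (isOpen_biInter_finset fun j _ => (hW j).compl.isOpen)

theorem exists_clopen_refinement [SecondCountableTopology α] [Nonempty α] {B : Set (Set α)}
    (hB : IsTopologicalBasis B) (hBc : ∀ b ∈ B, IsClopen b) {𝒰 : Set (Set α)}
    (h𝒰 : IsOpenCover 𝒰) :
    ∃ W U : ℕ → Set α, (∀ m, IsClopen (W m)) ∧ (∀ m, U m ∈ 𝒰) ∧ (∀ m, W m ⊆ U m) ∧
      ∀ x, ∃ m, x ∈ W m := by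
  set C := {b ∈ B | ∃ U ∈ 𝒰, b ⊆ U}
  have hC : ⋃₀ C = univ := eq_univ_of_forall fun x => by
    obtain ⟨u, hu, hxu⟩ := mem_sUnion.1 (h𝒰.2.symm ▸ mem_univ x)
    obtain ⟨b, hb, hxb, hbu⟩ := hB.exists_subset_of_mem_open hxu (h𝒰.1 u hu)
    exact ⟨b, ⟨hb, u, hu, hbu⟩, hxb⟩
  obtain ⟨T, hTc, hTC, hTun⟩ := isOpen_sUnion_countable C fun b hb => (hBc b hb.1).isOpen
  rw [hC] at hTun
  obtain ⟨W, rfl⟩ := hTc.exists_eq_range (.of_sUnion_eq_univ hTun)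
  choose U hU𝒰 hWU using fun m => (hTC ⟨m, rfl⟩).2
  refine ⟨W, U, fun m => hBc _ (hTC ⟨m, rfl⟩).1, hU𝒰, hWU, fun x => ?_⟩
  simpa using sUnion_eq_univ_iff.1 hTun x

theorem ufinOOmega_of_forall_exists_omegaBoundedBy [SecondCountableTopology α]
    {B : Set (Set α)} (hB : IsTopologicalBasis B) (hBc : ∀ b ∈ B, IsClopen b)
    (h : ∀ Ψ : α → ℕ → ℕ, Continuous Ψ → ∃ g, OmegaBoundedBy Ψ g) : UfinOOmega α := by
  classical
  refine ufinOOmega_iff.2 fun 𝒰 h𝒰 => ?_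
  rcases isEmpty_or_nonempty α with hα | hα
  · exact ⟨fun _ => ∅, fun _ => ⟨finite_empty, empty_subset _⟩, fun A => ⟨0, by simp⟩⟩
  choose W U hWc hU𝒰 hWU hcov using fun n => exists_clopen_refinement hB hBc (h𝒰 n).2
  obtain ⟨g, hg⟩ := h (fun x n => Nat.find (hcov n x))
    (continuous_pi fun n => continuous_nat_find_of_isClopen (hWc n) (hcov n))
  refine ⟨fun n => U n '' Iic (g n), fun n => ⟨(finite_Iic _).image _, ?_⟩, fun A => ?_⟩
  · rintro _ ⟨m, -, rfl⟩
    exact hU𝒰 n m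
  · obtain ⟨n, hn⟩ := hg A
    exact ⟨n, fun x hx =>
      ⟨_, mem_image_of_mem _ (hn x hx), hWU n _ (Nat.find_spec (hcov n x))⟩⟩

theorem ufinOOmega_iff_forall_exists_omegaBoundedBy [SecondCountableTopology α]
    {B : Set (Set α)} (hB : IsTopologicalBasis B) (hBc : ∀ b ∈ B, IsClopen b) :
    UfinOOmega α ↔ ∀ Ψ : α → ℕ → ℕ, Continuous Ψ → ∃ g, OmegaBoundedBy Ψ g :=
  ⟨fun hU _ hΨ => hU.exists_omegaBoundedBy hΨ, ufinOOmega_of_forall_exists_omegaBoundedBy hB hBc⟩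

end Topology

/-- A zero-dimensional set of reals satisfies `Ufin(O,Ω)` iff for each
continuous `Ψ : X → ℕ^ℕ`, either there is a principal (proper) filter `G`
on `ℕ` for which the reduced product image `Ψ[X]/G` is finite, or there is
a non-principal (proper) filter `F` on `ℕ` such that `Ψ[X]/F` is bounded
in `ℕ^ℕ/F`. -/
theorem ufinOOmega_iff_reduced_product (X : Set ℝ)
    (hX : ZeroDimensionalSet X) :
    UfinOOmega ↥X ↔
      ∀ Ψ : ↥X → (ℕ → ℕ), Continuous Ψ →
        (∃ G : Filter ℕ, (∅ : Set ℕ) ∉ G ∧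
            (∃ S : Set ℕ, G = Filter.principal S) ∧
            {C : Set (ℕ → ℕ) |
              ∃ f ∈ Set.range Ψ, C = {g | {n : ℕ | f n = g n} ∈ G}}.Finite) ∨
        (∃ F : Filter ℕ, (∅ : Set ℕ) ∉ F ∧
            (¬ ∃ S : Set ℕ, F = Filter.principal S) ∧
            ∃ g : ℕ → ℕ, ∀ f ∈ Set.range Ψ, {n : ℕ | f n < g n} ∈ F) := by
  obtain ⟨B, hB, hBc⟩ := hX
  rw [ufinOOmega_iff_forall_exists_omegaBoundedBy hB hBc]
  refine forall₂_congr fun Ψ _ => ?_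
  rw [exists_principal_finite_classes_iff, exists_omegaBoundedBy_iff]
end

section
/- Let X be a zero-dimensional set of reals. Then the following are equivalent: (1) X satisfies S1(BΓ, BΩ), i.e., for every sequence ⟨U_n : n ∈ ℕ⟩ of countable Borel γ-covers of X there exist U_n ∈ U_n such that {U_n : n ∈ ℕ} is an ω-cover of X; (2) for every Borel measurable function Ψ : X → ℕ^ℕ, the image Ψ[X] satisfies S1(Γ, Ω) (the same selection property with countable open γ-covers and open ω-covers); (3) for every Borel measurable function Ψ : X → ℕ^ℕ, the image Ψ[X] satisfies Sfin(Γ, Ω), i.e., for every sequence ⟨U_n : n ∈ ℕ⟩ of countable open γ-covers there exist finite F_n ⊆ U_n such that ∪_{n∈ℕ} F_n is an ω-cover; (4) for every Borel measurable function Ψ : X → ℕ^ℕ, the image Ψ[X] satisfies Ufin(Γ, Ω), i.e., for every sequence ⟨U_n : n ∈ ℕ⟩ of countable open γ-covers there exist finite F_n ⊆ U_n such that either ∪F_n is the whole image for some n, or {∪F_n : n ∈ ℕ} is an ω-cover of the image. -/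
open Filter

/-- `S1(Γ,Ω)` for countable open covers: from each member of a sequence of
countable open γ-covers we can choose one element so that the chosen sets
form an ω-cover. -/
def S1GammaOmega (α : Type*) [TopologicalSpace α] : Prop :=
  ∀ 𝒰 : ℕ → Set (Set α),
    (∀ n, (𝒰 n).Countable ∧ (∀ u ∈ 𝒰 n, IsOpen u) ∧ IsGammaCover (𝒰 n)) →
    ∃ sel : ℕ → Set α, (∀ n, sel n ∈ 𝒰 n) ∧ IsOmegaCover (Set.range sel)

/-- `Sfin(Γ,Ω)` for countable open covers. -/
def SfinGammaOmega (α : Type*) [TopologicalSpace α] : Prop :=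
  ∀ 𝒰 : ℕ → Set (Set α),
    (∀ n, (𝒰 n).Countable ∧ (∀ u ∈ 𝒰 n, IsOpen u) ∧ IsGammaCover (𝒰 n)) →
    ∃ ℱ : ℕ → Set (Set α), (∀ n, (ℱ n).Finite ∧ ℱ n ⊆ 𝒰 n) ∧
      IsOmegaCover (⋃ n, ℱ n)

/-- `Ufin(Γ,Ω)` for countable open covers. -/
def UfinGammaOmega (α : Type*) [TopologicalSpace α] : Prop :=
  ∀ 𝒰 : ℕ → Set (Set α),
    (∀ n, (𝒰 n).Countable ∧ (∀ u ∈ 𝒰 n, IsOpen u) ∧ IsGammaCover (𝒰 n)) →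
    ∃ ℱ : ℕ → Set (Set α), (∀ n, (ℱ n).Finite ∧ ℱ n ⊆ 𝒰 n) ∧
      ((∃ n, ⋃₀ ℱ n = Set.univ) ∨ IsOmegaCover {s | ∃ n, s = ⋃₀ ℱ n})

/-- A subset of `X` is Borel-in-`X` if it is a Borel subset of `ℝ`
intersected with `X`. -/
def IsBorelInX {X : Set ℝ} (u : Set ↥X) : Prop :=
  ∃ B : Set ℝ, MeasurableSet B ∧ u = ((↑) : ↥X → ℝ) ⁻¹' B

/-- `S1(BΓ,BΩ)`: for every sequence of countable Borel γ-covers of `X`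
there are selections forming an ω-cover. -/
def S1BGammaBOmega (X : Set ℝ) : Prop :=
  ∀ 𝒰 : ℕ → Set (Set ↥X),
    (∀ n, (𝒰 n).Countable ∧ (∀ u ∈ 𝒰 n, IsBorelInX u) ∧ IsGammaCover (𝒰 n)) →
    ∃ sel : ℕ → Set ↥X, (∀ n, sel n ∈ 𝒰 n) ∧ IsOmegaCover (Set.range sel)

/-- A function on `X` is Borel measurable if preimages of open sets are
Borel. -/
def IsBorelMeasurable {X : Set ℝ} (Ψ : ↥X → (ℕ → ℕ)) : Prop :=
  ∀ U : Set (ℕ → ℕ), IsOpen U → MeasurableSet (Ψ ⁻¹' U)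

/-! Enumerate each Borel γ-cover `𝒰 n` injectively as `k ↦ u n k` and let `Ψ x n` be the least
`m` with `x ∈ u n k` for all `k ≥ m`; this `Ψ` is Borel. On `Ψ[X]` the sublevel sets
`{y | y n ≤ m}` of the `n`-th coordinate form an open γ-cover, and a finite subfamily lies in a
single one of them, so `Ufin(Γ,Ω)` for `Ψ[X]` gives `g` such that every finite `F ⊆ X` satisfies
`Ψ x n ≤ g n`, i.e. `F ⊆ u n (g n)`, for some `n`. Conversely, open γ-covers of a Borel image pull
back to Borel γ-covers of `X`; surjectivity of `X → Ψ[X]` keeps them infinite and carries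
ω-covers back. -/

open Set Function

section Covers

variable {α β : Type*}

theorem isOmegaCover_iff {𝒱 : Set (Set α)} :
    IsOmegaCover 𝒱 ↔ ∀ F : Set α, F.Finite → ∃ V ∈ 𝒱, F ⊆ V := by
  refine ⟨And.right, fun h => ⟨eq_univ_of_forall fun x => ?_, h⟩⟩
  obtain ⟨V, hV, hxV⟩ := h {x} (finite_singleton x)
  exact ⟨V, hV, hxV rfl⟩

theorem isOmegaCover_of_univ_mem {𝒱 : Set (Set α)} (h : univ ∈ 𝒱) : IsOmegaCover 𝒱 :=
  isOmegaCover_iff.2 fun F _ => ⟨univ, h, subset_univ F⟩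

theorem exists_isOmegaCover_range_of_univ_mem {𝒰 : ℕ → Set (Set α)} (hne : ∀ n, (𝒰 n).Nonempty)
    {n₀ : ℕ} (hn₀ : univ ∈ 𝒰 n₀) :
    ∃ sel : ℕ → Set α, (∀ n, sel n ∈ 𝒰 n) ∧ IsOmegaCover (range sel) := by
  choose s hs using hne
  refine ⟨update s n₀ univ, fun n => ?_, isOmegaCover_of_univ_mem ⟨n₀, update_self n₀ univ s⟩⟩
  rcases eq_or_ne n n₀ with rfl | hn
  · rwa [update_self]
  · rw [update_of_ne hn]
    exact hs n

theorem IsGammaCover.preimage {𝒰 : Set (Set β)} (h : IsGammaCover 𝒰) {f : α → β}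
    (hf : Surjective f) : IsGammaCover ((f ⁻¹' ·) '' 𝒰) := by
  obtain ⟨hcover, hinf, hcofin⟩ := h
  refine ⟨eq_univ_of_forall fun x => ?_, hinf.image (preimage_injective.2 hf).injOn,
    fun x => ((hcofin (f x)).image (f ⁻¹' ·)).subset ?_⟩
  · obtain ⟨U, hU, hxU⟩ := hcover ▸ mem_univ (f x)
    exact ⟨f ⁻¹' U, mem_image_of_mem _ hU, hxU⟩
  · rintro _ ⟨⟨U, hU, rfl⟩, hxU⟩
    exact ⟨U, ⟨hU, hxU⟩, rfl⟩

theorem IsOmegaCover.of_preimage {𝒱 : Set (Set β)} {f : α → β} (hf : Surjective f)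
    (h : IsOmegaCover ((f ⁻¹' ·) '' 𝒱)) : IsOmegaCover 𝒱 := by
  refine isOmegaCover_iff.2 fun F hF => ?_
  obtain ⟨_, ⟨V, hV, rfl⟩, hFV⟩ := h.2 (surjInv hf '' F) (hF.image _)
  refine ⟨V, hV, fun y hy => ?_⟩
  have hy' : f (surjInv hf y) ∈ V := hFV (mem_image_of_mem _ hy)
  rwa [surjInv_eq hf y] at hy'

theorem IsGammaCover.eventually_mem {𝒰 : Set (Set α)} (h : IsGammaCover 𝒰) {u : ℕ → Set α}
    (hu : Injective u) (hmem : ∀ k, u k ∈ 𝒰) (x : α) : ∀ᶠ k in atTop, x ∈ u k := by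
  have hfin : {k | x ∉ u k}.Finite :=
    ((h.2.2 x).preimage hu.injOn).subset fun k hk => ⟨hmem k, hk⟩
  simpa only [← Nat.cofinite_eq_atTop, mem_ofPred_eq, not_not] using hfin.eventually_cofinite_notMem

theorem exists_sUnion_subset_of_monotone {S : ℕ → Set α} (hS : Monotone S) {ℱ : Set (Set α)}
    (hℱ : ℱ.Finite) (hsub : ℱ ⊆ range S) : ∃ m, ⋃₀ ℱ ⊆ S m := by
  have : ∀ᶠ m in atTop, ∀ V ∈ ℱ, V ⊆ S m := by
    refine (eventually_all_finite hℱ).2 fun V hV => ?_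
    obtain ⟨k, rfl⟩ := hsub hV
    exact eventually_atTop.2 ⟨k, fun m hm => hS hm⟩
  obtain ⟨m, hm⟩ := this.exists
  exact ⟨m, sUnion_subset hm⟩

theorem isGammaCover_range_sublevel {g : α → ℕ} (hg : ∀ m, ∃ x, m < g x) :
    IsGammaCover (range fun m => {x | g x ≤ m}) := by
  refine ⟨eq_univ_of_forall fun x => ⟨_, mem_range_self (g x), le_refl (g x)⟩, ?_, fun x => ?_⟩
  · intro hfin
    have hmono : Monotone fun m => {x | g x ≤ m} := fun _ _ hle _ hx => le_trans hx hle
    obtain ⟨m, hm⟩ := exists_sUnion_subset_of_monotone hmono hfin subset_rfl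
    obtain ⟨x, hx⟩ := hg m
    exact hx.not_ge (hm ⟨_, mem_range_self (g x), le_refl (g x)⟩)
  · refine ((finite_Iio (g x)).image fun m => {x | g x ≤ m}).subset ?_
    rintro _ ⟨⟨m, rfl⟩, hxm⟩
    exact ⟨m, mem_Iio.2 (not_le.1 hxm), rfl⟩

end Covers

section SelectionPrinciples

variable {α : Type*} [TopologicalSpace α]

theorem S1GammaOmega.sfinGammaOmega (h : S1GammaOmega α) : SfinGammaOmega α := by
  intro 𝒰 h𝒰
  obtain ⟨sel, hsel, homega⟩ := h 𝒰 h𝒰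
  refine ⟨fun n => {sel n}, fun n => ⟨finite_singleton _, singleton_subset_iff.2 (hsel n)⟩, ?_⟩
  rwa [iUnion_singleton_eq_range]

theorem SfinGammaOmega.ufinGammaOmega (h : SfinGammaOmega α) : UfinGammaOmega α := by
  intro 𝒰 h𝒰
  obtain ⟨ℱ, hℱ, homega⟩ := h 𝒰 h𝒰
  refine ⟨ℱ, hℱ, Or.inr (isOmegaCover_iff.2 fun F hF => ?_)⟩
  obtain ⟨V, hV, hFV⟩ := homega.2 F hF
  obtain ⟨n, hVn⟩ := mem_iUnion.1 hV
  exact ⟨⋃₀ ℱ n, ⟨n, rfl⟩, hFV.trans (subset_sUnion_of_mem hVn)⟩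

end SelectionPrinciples

theorem exists_measurable_le_imp_mem {α : Type*} [MeasurableSpace α] {u : ℕ → Set α}
    (hu : ∀ k, MeasurableSet (u k)) (hev : ∀ x, ∀ᶠ k in atTop, x ∈ u k) :
    ∃ φ : α → ℕ, Measurable φ ∧ ∀ x k, φ x ≤ k → x ∈ u k := by
  classical
  have hp : ∀ x, ∃ m, ∀ k, m ≤ k → x ∈ u k := fun x => eventually_atTop.1 (hev x)
  refine ⟨fun x => Nat.find (hp x), measurable_find hp fun m => ?_,
    fun x k => Nat.find_spec (hp x) k⟩
  simpa only [ofPred_forall, ofPred_mem_eq] using MeasurableSet.iInter fun k => MeasurableSet.iInter fun _ => hu k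

theorem UfinGammaOmega.exists_forall_finite_exists_coord_le {Y : Set (ℕ → ℕ)}
    (hY : UfinGammaOmega Y) (hunbdd : ∀ n m, ∃ y ∈ Y, m < y n) :
    ∃ g : ℕ → ℕ, ∀ F : Set Y, F.Finite → ∃ n, ∀ y ∈ F, (y : ℕ → ℕ) n ≤ g n := by
  let S : ℕ → ℕ → Set Y := fun n m => {y | (y : ℕ → ℕ) n ≤ m}
  have hunbdd' : ∀ n m, ∃ y : Y, m < (y : ℕ → ℕ) n := fun n m => by
    obtain ⟨y, hy, hmy⟩ := hunbdd n m
    exact ⟨⟨y, hy⟩, hmy⟩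
  have hSmono : ∀ n, Monotone (S n) := fun _ _ _ hle _ hy => le_trans hy hle
  have hS : ∀ n, (range (S n)).Countable ∧ (∀ V ∈ range (S n), IsOpen V) ∧
      IsGammaCover (range (S n)) := fun n => by
    refine ⟨countable_range _, ?_, isGammaCover_range_sublevel (hunbdd' n)⟩
    rintro _ ⟨m, rfl⟩
    exact (isOpen_discrete (Iic m)).preimage
      ((continuous_apply (A := fun _ : ℕ => ℕ) n).comp continuous_subtype_val)
  obtain ⟨ℱ, hℱ, hcases⟩ := hY _ hS
  choose g hg using fun n =>
    exists_sUnion_subset_of_monotone (hSmono n) (hℱ n).1 (hℱ n).2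
  refine ⟨g, ?_⟩
  rcases hcases with ⟨n, hn⟩ | homega
  · obtain ⟨y, hy⟩ := hunbdd' n (g n)
    exact absurd (hg n (hn ▸ mem_univ y)) hy.not_ge
  · intro F hF
    obtain ⟨_, ⟨n, rfl⟩, hFn⟩ := homega.2 F hF
    exact ⟨n, fun y hy => hg n (hFn hy)⟩

section BorelImages

variable {X : Set ℝ}

theorem isBorelInX_iff_measurableSet {u : Set X} : IsBorelInX u ↔ MeasurableSet u :=
  ⟨fun ⟨_, hB, hu⟩ => hu ▸ measurable_subtype_coe hB, fun ⟨B, hB, hu⟩ => ⟨B, hB, hu.symm⟩⟩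

theorem S1BGammaBOmega.s1GammaOmega_range (h : S1BGammaBOmega X) {Ψ : X → ℕ → ℕ}
    (hΨ : IsBorelMeasurable Ψ) : S1GammaOmega (range Ψ) := by
  intro 𝒰 h𝒰
  have hsurj : Surjective (rangeFactorization Ψ) := rangeFactorization_surjective
  obtain ⟨sel, hsel, homega⟩ := h (fun n => (rangeFactorization Ψ ⁻¹' ·) '' 𝒰 n) fun n => by
    obtain ⟨hcount, hopen, hgamma⟩ := h𝒰 n
    refine ⟨hcount.image _, ?_, hgamma.preimage hsurj⟩
    rintro _ ⟨U, hU, rfl⟩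
    obtain ⟨W, hW, rfl⟩ := isOpen_induced_iff.1 (hopen U hU)
    exact isBorelInX_iff_measurableSet.2 (hΨ W hW)
  choose U hU hUsel using hsel
  have hsel_eq : sel = (rangeFactorization Ψ ⁻¹' ·) ∘ U := funext fun n => (hUsel n).symm
  rw [hsel_eq, range_comp] at homega
  exact ⟨U, hU, homega.of_preimage hsurj⟩

theorem s1BGammaBOmega_of_forall_ufinGammaOmega_range
    (h : ∀ Ψ : X → ℕ → ℕ, IsBorelMeasurable Ψ → UfinGammaOmega (range Ψ)) :
    S1BGammaBOmega X := by
  intro 𝒰 h𝒰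
  by_cases huniv : ∃ n, univ ∈ 𝒰 n
  · obtain ⟨n₀, hn₀⟩ := huniv
    exact exists_isOmegaCover_range_of_univ_mem (fun n => (h𝒰 n).2.2.2.1.nonempty) hn₀
  rw [not_exists] at huniv
  let u : ℕ → ℕ → Set X := fun n k => (h𝒰 n).2.2.2.1.natEmbedding _ k
  have hu_mem : ∀ n k, u n k ∈ 𝒰 n := fun n k => Subtype.prop _
  have hu_inj : ∀ n, Injective (u n) := fun n =>
    Subtype.val_injective.comp (Embedding.injective _)
  choose φ hφ hφu using fun n => exists_measurable_le_imp_mem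
    (fun k => isBorelInX_iff_measurableSet.1 ((h𝒰 n).2.1 _ (hu_mem n k)))
    ((h𝒰 n).2.2.eventually_mem (hu_inj n) (hu_mem n))
  let Ψ : X → ℕ → ℕ := fun x n => φ n x
  have hΨ : IsBorelMeasurable Ψ := fun _ hU => measurable_pi_lambda _ hφ hU.measurableSet
  have hunbdd : ∀ n m, ∃ y ∈ range Ψ, m < y n := fun n m => by
    obtain ⟨x, hx⟩ := (ne_univ_iff_exists_notMem _).1 fun h => huniv n (h ▸ hu_mem n m)
    exact ⟨Ψ x, mem_range_self x, not_le.1 fun hle => hx (hφu n x m hle)⟩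
  obtain ⟨g, hg⟩ := (h Ψ hΨ).exists_forall_finite_exists_coord_le hunbdd
  refine ⟨fun n => u n (g n), fun n => hu_mem n (g n), isOmegaCover_iff.2 fun F hF => ?_⟩
  obtain ⟨n, hn⟩ := hg _ (hF.image (rangeFactorization Ψ))
  exact ⟨u n (g n), mem_range_self n, fun x hx => hφu n x (g n) (hn _ (mem_image_of_mem _ hx))⟩

end BorelImages

theorem s1BGammaBOmega_tfae_general (X : Set ℝ) :
    [S1BGammaBOmega X,
     ∀ Ψ : ↥X → (ℕ → ℕ), IsBorelMeasurable Ψ → S1GammaOmega ↥(Set.range Ψ),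
     ∀ Ψ : ↥X → (ℕ → ℕ), IsBorelMeasurable Ψ → SfinGammaOmega ↥(Set.range Ψ),
     ∀ Ψ : ↥X → (ℕ → ℕ), IsBorelMeasurable Ψ → UfinGammaOmega ↥(Set.range Ψ)].TFAE := by
  tfae_have 1 → 2 := fun h _ hΨ => h.s1GammaOmega_range hΨ
  tfae_have 2 → 3 := fun h Ψ hΨ => (h Ψ hΨ).sfinGammaOmega
  tfae_have 3 → 4 := fun h Ψ hΨ => (h Ψ hΨ).ufinGammaOmega
  tfae_have 4 → 1 := s1BGammaBOmega_of_forall_ufinGammaOmega_range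
  tfae_finish

/-- For a zero-dimensional set of reals `X`, the following are equivalent:
(1) `X` satisfies `S1(BΓ,BΩ)`; (2) every Borel image of `X` in the Baire
space satisfies `S1(Γ,Ω)`; (3) every Borel image satisfies `Sfin(Γ,Ω)`;
(4) every Borel image satisfies `Ufin(Γ,Ω)`. -/
theorem s1BGammaBOmega_tfae (X : Set ℝ) (hX : ZeroDimensionalSet X) :
    [S1BGammaBOmega X,
     ∀ Ψ : ↥X → (ℕ → ℕ), IsBorelMeasurable Ψ → S1GammaOmega ↥(Set.range Ψ),
     ∀ Ψ : ↥X → (ℕ → ℕ), IsBorelMeasurable Ψ → SfinGammaOmega ↥(Set.range Ψ),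
     ∀ Ψ : ↥X → (ℕ → ℕ), IsBorelMeasurable Ψ → UfinGammaOmega ↥(Set.range Ψ)].TFAE :=
  s1BGammaBOmega_tfae_general X
end

section
/- Let κ be a cardinal with κ < 𝔡, and let X_α ⊆ ℕ^ℕ, for α < κ, each be bounded with respect to ≤*. Then for X = ∪_{α<κ} X_α, the set maxfin(X) is not dominating. -/
open Filter

/-- The dominating number `𝔡`: the least cardinality of a dominating subset
of the Baire space. -/
noncomputable def dominatingNumber : Cardinal :=
  sInf {c : Cardinal | ∃ Y : Set (ℕ → ℕ), Dominating Y ∧ Cardinal.mk ↥Y = c}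

lemma not_dominating_of_countable {Y : Set (ℕ → ℕ)} (hY : Y.Countable) :
    ¬ Dominating Y := by
  intro hD
  rcases Y.eq_empty_or_nonempty with h | h
  · obtain ⟨f, hf, -⟩ := hD 0
    simp [h] at hf
  obtain ⟨e, he⟩ := hY.exists_eq_range h
  obtain ⟨f, hfY, hle⟩ := hD (fun n => (Finset.range (n + 1)).sup (fun k => e k n) + 1)
  rw [he] at hfY
  obtain ⟨k, rfl⟩ := hfY
  obtain ⟨n, hn, hn2⟩ := ((hle.and (Filter.eventually_ge_atTop k)).exists)
  have : e k n ≤ (Finset.range (n + 1)).sup (fun j => e j n) :=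
    Finset.le_sup (f := fun j => e j n) (Finset.mem_range.mpr (Nat.lt_succ_of_le hn2))
  have hn' : (Finset.range (n + 1)).sup (fun j => e j n) + 1 ≤ e k n := hn
  omega

lemma dominating_univ : Dominating (Set.univ : Set (ℕ → ℕ)) :=
  fun g => ⟨g, Set.mem_univ _, Filter.Eventually.of_forall fun _ => le_rfl⟩

lemma aleph0_lt_dominatingNumber : Cardinal.aleph0 < dominatingNumber := by
  have hne : {c : Cardinal | ∃ Y : Set (ℕ → ℕ), Dominating Y ∧ Cardinal.mk ↥Y = c}.Nonempty :=
    ⟨_, Set.univ, dominating_univ, rfl⟩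
  obtain ⟨Y, hYd, hYc⟩ := csInf_mem hne
  rw [dominatingNumber, ← hYc]
  by_contra hle
  push_neg at hle
  exact not_dominating_of_countable
    ((Set.countable_coe_iff.mp (Cardinal.mk_le_aleph0_iff.mp hle))) hYd

lemma dominatingNumber_le {Y : Set (ℕ → ℕ)} (hY : Dominating Y) :
    dominatingNumber ≤ Cardinal.mk ↥Y :=
  csInf_le' ⟨Y, hY, rfl⟩

/-- If `X` is a union of fewer than `𝔡` many bounded subsets of the Baire
space, then `maxfin X` is not dominating. -/
theorem maxfin_iUnion_not_dominating_of_lt_dominatingNumber (ι : Type)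
    (hι : Cardinal.mk ι < dominatingNumber)
    (Xa : ι → Set (ℕ → ℕ)) (hXa : ∀ i, BoundedStar (Xa i)) :
    ¬ Dominating (maxfin (⋃ i, Xa i)) := by
  intro hD
  choose g hg using hXa
  set D : Set (ℕ → ℕ) :=
    (fun T : Finset ι => fun n => T.sup (fun i => g i n)) '' {T | T.Nonempty} with hDdef
  -- D has cardinality < 𝔡
  have hcard : Cardinal.mk ↥D < dominatingNumber := by
    have h1 : Cardinal.mk ↥D ≤ Cardinal.mk (Finset ι) :=
      le_trans Cardinal.mk_image_le (Cardinal.mk_subtype_le _)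
    have h2 : Cardinal.mk (Finset ι) ≤ max (Cardinal.mk ι) Cardinal.aleph0 := by
      by_cases h : Infinite ι
      · rw [Cardinal.mk_finset_of_infinite]; exact le_max_left _ _
      · have : Finite ι := not_infinite_iff_finite.mp h
        exact le_trans Cardinal.mk_le_aleph0 (le_max_right _ _)
    exact lt_of_le_of_lt (h1.trans h2) (max_lt hι aleph0_lt_dominatingNumber)
  -- D is not dominating
  have hDnd : ¬ Dominating D := fun h => absurd (dominatingNumber_le h) (not_le.mpr hcard)
  rw [Dominating] at hDnd
  push_neg at hDnd
  obtain ⟨h, hh⟩ := hDnd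
  -- h is dominated by some element of maxfin X
  obtain ⟨m, hm, hhm⟩ := hD h
  obtain ⟨F, hFne, hFsub, rfl⟩ := hm
  -- find a finset T of indices dominating F's sup
  have key : ∀ F : Finset (ℕ → ℕ), ↑F ⊆ (⋃ i, Xa i) →
      ∃ T : Finset ι, (F.Nonempty → T.Nonempty) ∧
        ∀ᶠ n in atTop, F.sup (fun f => f n) ≤ T.sup (fun i => g i n) := by
    classical
    intro F
    induction F using Finset.induction_on with
    | empty =>
      intro _
      exact ⟨∅, fun h => absurd h (Finset.not_nonempty_empty),
        Filter.Eventually.of_forall fun n => by simp⟩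
    | @insert f F' hf ih =>
      intro hsub
      have hfX : f ∈ ⋃ i, Xa i := hsub (by simp)
      obtain ⟨i0, hi0⟩ := Set.mem_iUnion.mp hfX
      obtain ⟨T, hTne, hT⟩ := ih (fun x hx => hsub (by
        simp only [Finset.coe_insert, Set.mem_insert_iff]
        exact Or.inr hx))
      refine ⟨insert i0 T, fun _ => ⟨i0, Finset.mem_insert_self _ _⟩, ?_⟩
      filter_upwards [hT, hg i0 f hi0] with n h1 h2
      rw [Finset.sup_insert, Finset.sup_insert]
      exact sup_le_sup h2 h1
  obtain ⟨T, hTne, hT⟩ := key F hFsub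
  have hTD : (fun n => T.sup (fun i => g i n)) ∈ D :=
    ⟨T, hTne hFne, rfl⟩
  apply hh _ hTD
  filter_upwards [hhm, hT] with n h1 h2 using h1.trans h2
end

section
/- There exist subsets A and B of ℕ^ℕ such that maxfin(A) and maxfin(B) are not dominating, but maxfin(A ∪ B) is dominating. -/
open Filter

/-- There are `A, B ⊆ ℕ^ℕ` with `maxfin A` and `maxfin B` not dominating,
while `maxfin (A ∪ B)` is dominating. -/
theorem exists_maxfin_union_dominating :
    ∃ A B : Set (ℕ → ℕ),
      ¬ Dominating (maxfin A) ∧ ¬ Dominating (maxfin B) ∧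
        Dominating (maxfin (A ∪ B)) := by
  classical
  refine ⟨{f | ∀ n, Odd n → f n = 0}, {f | ∀ n, Even n → f n = 0}, ?_, ?_, ?_⟩
  · intro h
    obtain ⟨f, ⟨F, hFne, hFA, hf⟩, hev⟩ := h (fun _ => 1)
    have hzero : ∀ n, Odd n → f n = 0 := by
      intro n hn
      rw [hf]
      simp only
      exact Nat.le_zero.mp (Finset.sup_le fun g hg => (hFA hg n hn).le)
    obtain ⟨N, hN⟩ := eventually_atTop.mp hev
    have h1 := hN (2 * N + 1) (by omega)
    rw [hzero (2 * N + 1) ⟨N, by omega⟩] at h1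
    simp at h1
  · intro h
    obtain ⟨f, ⟨F, hFne, hFA, hf⟩, hev⟩ := h (fun _ => 1)
    have hzero : ∀ n, Even n → f n = 0 := by
      intro n hn
      rw [hf]
      simp only
      exact Nat.le_zero.mp (Finset.sup_le fun g hg => (hFA hg n hn).le)
    obtain ⟨N, hN⟩ := eventually_atTop.mp hev
    have h1 := hN (2 * N) (by omega)
    rw [hzero (2 * N) ⟨N, by omega⟩] at h1
    simp at h1
  · intro g
    let fE : ℕ → ℕ := fun n => if Odd n then 0 else g n
    let fO : ℕ → ℕ := fun n => if Even n then 0 else g n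
    refine ⟨fun n => ({fE, fO} : Finset (ℕ → ℕ)).sup (fun f => f n),
      ⟨{fE, fO}, ⟨fE, by simp⟩, ?_, rfl⟩, ?_⟩
    · intro f hf
      simp only [Finset.coe_insert, Finset.coe_singleton, Set.mem_insert_iff,
        Set.mem_singleton_iff] at hf
      rcases hf with rfl | rfl
      · exact Or.inl fun n hn => by simp only [fE, if_pos hn]
      · exact Or.inr fun n hn => by simp only [fO, if_pos hn]
    · filter_upwards with n
      rcases Nat.even_or_odd n with hn | hn
      · have h1 : fE n = g n := by
          simp only [fE, if_neg (Nat.not_odd_iff_even.mpr hn)]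
        calc g n = fE n := h1.symm
          _ ≤ _ := by exact Finset.le_sup (f := fun h : ℕ → ℕ => h n) (Finset.mem_insert_self _ _)
      · have h1 : fO n = g n := by
          simp only [fO, if_neg (Nat.not_even_iff_odd.mpr hn)]
        calc g n = fO n := h1.symm
          _ ≤ _ := by exact Finset.le_sup (f := fun h : ℕ → ℕ => h n) (Finset.mem_insert_of_mem (Finset.mem_singleton_self _))
end
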